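/- arXiv:2603.27054 — 6 statements merged into one kernel-verified Lean document; each statement's English description precedes it below -/
import Mathlib

section
/- Let f : S₁ → S₂ be a branched covering (a continuous, open, surjective map with finite fibers) from a closed surface S₁ onto a closed surface S₂, each equipped with a fixed metric inducing its topology, and let K ⊆ S₂ be a nonempty compact set. If K (with the restricted metric) is a Peano compactum, then L = f⁻¹(K) (with the restricted metric) is a Peano compactum. -/
open Set Metric Filter Topology unitInterval

/-- A space is locally euclidean of dimension 2 if every point has an open neighborhood
homeomorphic to `ℝ²`. A *closed surface* is a nonempty compact connected Hausdorff space
with this property. -/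
def IsSurfaceLocallyEuclidean (S : Type*) [TopologicalSpace S] : Prop :=
  ∀ x : S, ∃ U : Set S, IsOpen U ∧ x ∈ U ∧ Nonempty (U ≃ₜ (ℝ × ℝ))

/-- An upper semicontinuous decomposition of `K`: a partition of `K` into nonempty closed
sets such that each element `δ` and open `U ⊇ δ` admit a relatively open `V` (a union of
elements of the decomposition) with `δ ⊆ V ⊆ U`. -/
def IsUSCDecomp {X : Type*} [TopologicalSpace X] (K : Set X) (D : Set (Set X)) : Prop :=
  (∀ δ ∈ D, δ.Nonempty ∧ IsClosed δ ∧ δ ⊆ K) ∧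
  (∀ δ ∈ D, ∀ δ' ∈ D, δ ≠ δ' → Disjoint δ δ') ∧
  ⋃₀ D = K ∧
  ∀ δ ∈ D, ∀ U : Set X, IsOpen U → δ ⊆ U →
    ∃ D' ⊆ D, (∃ W : Set X, IsOpen W ∧ ⋃₀ D' = W ∩ K) ∧ δ ⊆ ⋃₀ D' ∧ ⋃₀ D' ⊆ U

/-- An upper semicontinuous decomposition into subcontinua. -/
def IsUSCDecompCont {X : Type*} [TopologicalSpace X] (K : Set X) (D : Set (Set X)) : Prop :=
  IsUSCDecomp K D ∧ ∀ δ ∈ D, IsConnected δ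

/-- The relation on `↥K` identifying two points lying in a common element of `D`. -/
def decompRel {X : Type*} (K : Set X) (D : Set (Set X)) : K → K → Prop :=
  fun x y => ∃ δ ∈ D, (x : X) ∈ δ ∧ (y : X) ∈ δ

/-- The quotient space of the decomposition `D` of `K`, with the quotient topology. -/
abbrev DecompQuot {X : Type*} [TopologicalSpace X] (K : Set X) (D : Set (Set X)) : Type _ :=
  Quot (decompRel K D)

/-- A topological space is a *Peano compactum* if it is compact, all of its connected
components are locally connected, and there is a metric inducing its topology for which,
for every `ε > 0`, at most finitely many connected components have diameter `> ε`. -/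
def IsPeanoCompactumSp (Y : Type*) [ty : TopologicalSpace Y] : Prop :=
  CompactSpace Y ∧
  (∀ y : Y, LocallyConnectedSpace (connectedComponent y)) ∧
  ∃ m : MetricSpace Y, m.toPseudoMetricSpace.toUniformSpace.toTopologicalSpace = ty ∧
    ∀ ε : ℝ, 0 < ε →
      {C : Set Y | (∃ y : Y, C = connectedComponent y) ∧
        ε < @Metric.diam Y m.toPseudoMetricSpace C}.Finite

/-- A compact subset `K` of a metric space is a Peano compactum with the restricted
metric iff all of its connected components are locally connected and for each `ε > 0`
only finitely many components have diameter `> ε`. -/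
def IsPeanoCompactumSet {X : Type*} [MetricSpace X] (K : Set X) : Prop :=
  IsCompact K ∧
  (∀ x ∈ K, LocallyConnectedSpace (connectedComponentIn K x)) ∧
  ∀ ε : ℝ, 0 < ε →
    {C : Set X | (∃ x ∈ K, C = connectedComponentIn K x) ∧ ε < Metric.diam C}.Finite

/-- A Peano decomposition: a usc decomposition into subcontinua whose quotient space
(with the quotient topology) is a Peano compactum. -/
def IsPeanoDecomp {X : Type*} [MetricSpace X] (K : Set X) (D : Set (Set X)) : Prop :=
  IsUSCDecompCont K D ∧ IsPeanoCompactumSp (DecompQuot K D)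

/-- A decomposition `D` refines `D'` if every element of `D` is contained in an
element of `D'`. -/
def Refines {X : Type*} (D D' : Set (Set X)) : Prop :=
  ∀ δ ∈ D, ∃ δ' ∈ D', δ ⊆ δ'

/-- A branched covering between closed surfaces (Stoïlow): a continuous, open,
surjective map with finite fibers. -/
def IsBranchedCovering {X Y : Type*} [TopologicalSpace X] [TopologicalSpace Y]
    (f : X → Y) : Prop :=
  Continuous f ∧ IsOpenMap f ∧ Function.Surjective f ∧ ∀ y : Y, (f ⁻¹' {y}).Finite

/-!
If `g : M → C` is continuous and open, `M` is compact Hausdorff and `C` is connected, then every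
component of `M` maps onto `C`: the images of its clopen neighbourhoods are clopen, hence all of
`C`, and in a compact Hausdorff space a component is the intersection of its clopen
neighbourhoods. Over a component `C` of `K` this makes every component of `f⁻¹(K)` lying over `C`
meet the finite fibre of one fixed point of `C`, so only finitely many of them do. Over the closure
`D` of a small connected neighbourhood of `f x` in its component, restricted to a ball about `x`
that is separated from the rest of the fibre, it makes `f⁻¹(D) ∩ ball x ρ` a connected
neighbourhood of `x` in its component. Finally, as fibres are finite and `S₁` is compact,
connected sets with small image are uniformly small, so large components of `f⁻¹(K)` lie over
large components of `K`.
-/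

section

variable {X Y : Type*}

theorem IsOpenMap.surjOn_connectedComponent [TopologicalSpace X] [TopologicalSpace Y]
    [CompactSpace X] [T2Space X] [T2Space Y] [PreconnectedSpace Y] {f : X → Y}
    (hfc : Continuous f) (hfo : IsOpenMap f) (x : X) :
    SurjOn f (connectedComponent x) univ := by
  intro y _
  have hclopen : ∀ s : Set X, IsClopen s → x ∈ s → (s ∩ f ⁻¹' {y}).Nonempty := by
    intro s hs hxs
    have himg : f '' s = univ := IsClopen.eq_univ
      ⟨(hs.1.isCompact.image hfc).isClosed, hfo s hs.2⟩ ⟨f x, mem_image_of_mem f hxs⟩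
    obtain ⟨z, hz, hzy⟩ : y ∈ f '' s := himg ▸ mem_univ y
    exact ⟨z, hz, hzy⟩
  let ι := {s : Set X // IsClopen s ∧ x ∈ s}
  have : Nonempty ι := ⟨⟨univ, isClopen_univ, mem_univ x⟩⟩
  have hclosed : ∀ s : ι, IsClosed ((s : Set X) ∩ f ⁻¹' {y}) :=
    fun s => s.2.1.1.inter (isClosed_singleton.preimage hfc)
  obtain ⟨z, hz⟩ := IsCompact.nonempty_iInter_of_directed_nonempty_isCompact_isClosed
    (fun s : ι => (s : Set X) ∩ f ⁻¹' {y})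
    (fun s t => ⟨⟨s.1 ∩ t.1, s.2.1.inter t.2.1, s.2.2, t.2.2⟩,
      inter_subset_inter_left _ inter_subset_left, inter_subset_inter_left _ inter_subset_right⟩)
    (fun s => hclopen s.1 s.2.1 s.2.2) (fun s => (hclosed s).isCompact) hclosed
  rw [mem_iInter] at hz
  refine ⟨z, ?_, (hz ⟨univ, isClopen_univ, mem_univ x⟩).2⟩
  rw [connectedComponent_eq_iInter_isClopen]
  exact mem_iInter.mpr fun s => (hz s).1

theorem exists_mem_connectedComponentIn_inter_preimage [TopologicalSpace X] [T2Space X]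
    [TopologicalSpace Y] [T2Space Y] {f : X → Y} (hfc : Continuous f) (hfo : IsOpenMap f)
    {U : Set X} (hU : IsOpen U) {D : Set Y} (hD : IsPreconnected D)
    (hM : IsCompact (U ∩ f ⁻¹' D)) {x : X} (hx : x ∈ U ∩ f ⁻¹' D) {y : Y} (hy : y ∈ D) :
    ∃ z ∈ connectedComponentIn (U ∩ f ⁻¹' D) x, f z = y := by
  have : CompactSpace ↥(U ∩ f ⁻¹' D) := isCompact_iff_compactSpace.mp hM
  have : PreconnectedSpace D := Subtype.preconnectedSpace hD
  have hmaps : MapsTo f (U ∩ f ⁻¹' D) D := fun _ h => h.2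
  have hopen : IsOpenMap (hmaps.restrict f _ _) := by
    intro s hs
    obtain ⟨V, hV, rfl⟩ := isOpen_induced_iff.mp hs
    refine isOpen_induced_iff.mpr ⟨f '' (V ∩ U), hfo _ (hV.inter hU), ?_⟩
    ext ⟨w, hw⟩
    simp only [mem_preimage, mem_image, MapsTo.restrict, Subtype.ext_iff, Subtype.exists,
      Subtype.map, mem_inter_iff]
    constructor
    · rintro ⟨v, ⟨hvV, hvU⟩, rfl⟩
      exact ⟨v, ⟨hvU, hw⟩, hvV, rfl⟩
    · rintro ⟨v, ⟨hvU, -⟩, hvV, rfl⟩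
      exact ⟨v, ⟨hvV, hvU⟩, rfl⟩
  obtain ⟨z, hz, hzy⟩ := hopen.surjOn_connectedComponent (hfc.restrict hmaps) ⟨x, hx⟩
    (mem_univ ⟨y, hy⟩)
  rw [connectedComponentIn_eq_image hx]
  exact ⟨z, mem_image_of_mem _ hz, congrArg Subtype.val hzy⟩

theorem locallyConnectedSpace_subtype_iff [TopologicalSpace X] {s : Set X} :
    LocallyConnectedSpace s ↔
      ∀ x ∈ s, ∀ U ∈ 𝓝 x, ∃ V ∈ 𝓝[s] x, IsPreconnected V ∧ V ⊆ s ∩ U := by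
  rw [locallyConnectedSpace_iff_connected_subsets]
  constructor
  · intro h x hx U hU
    obtain ⟨V, hV, hVconn, hVU⟩ := h ⟨x, hx⟩ (Subtype.val ⁻¹' U)
      (preimage_coe_mem_nhds_subtype.mpr (mem_nhdsWithin_of_mem_nhds hU))
    refine ⟨Subtype.val '' V, mem_nhds_subtype_iff_nhdsWithin.mp hV,
      hVconn.image _ continuous_subtype_val.continuousOn, ?_⟩
    rintro _ ⟨v, hv, rfl⟩
    exact ⟨v.2, hVU hv⟩
  · intro h x U' hU'
    obtain ⟨U, hU, hUU'⟩ := mem_nhds_subtype s x U' |>.mp hU'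
    obtain ⟨V, hV, hVconn, hVsU⟩ := h x x.2 U hU
    have hVs : Subtype.val '' (Subtype.val ⁻¹' V : Set s) = V :=
      Subtype.image_preimage_coe s V ▸ inter_eq_right.mpr (hVsU.trans inter_subset_left)
    refine ⟨Subtype.val ⁻¹' V, preimage_coe_mem_nhds_subtype.mpr hV, ?_,
      (preimage_mono (hVsU.trans inter_subset_right)).trans hUU'⟩
    exact Topology.IsInducing.subtypeVal.isPreconnected_image.mp (by rwa [hVs])

theorem IsClosed.connectedComponentIn [TopologicalSpace X] {K : Set X} (hK : IsClosed K)
    (x : X) : IsClosed (connectedComponentIn K x) := by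
  by_cases hx : x ∈ K
  · refine isClosed_of_closure_subset <| isPreconnected_connectedComponentIn.closure
      |>.subset_connectedComponentIn (subset_closure (mem_connectedComponentIn hx)) ?_
    exact hK.closure_subset_iff.mpr (connectedComponentIn_subset K x)
  · simp [connectedComponentIn_eq_empty hx]

theorem image_connectedComponentIn_preimage_subset [TopologicalSpace X] [TopologicalSpace Y]
    {f : X → Y} (hfc : Continuous f) {K : Set Y} {x : X} (hx : x ∈ f ⁻¹' K) :
    f '' connectedComponentIn (f ⁻¹' K) x ⊆ connectedComponentIn K (f x) :=
  (hfc.continuousOn.image_connectedComponentIn_subset hx).trans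
    (connectedComponentIn_mono _ (image_preimage_subset f K))

theorem Set.Finite.exists_pos_pairwise_disjoint_closedBall [MetricSpace X] {F : Set X}
    (hF : F.Finite) {ε : ℝ} (hε : 0 < ε) :
    ∃ ρ > 0, ρ ≤ ε ∧ F.Pairwise fun a b => Disjoint (closedBall a ρ) (closedBall b ρ) := by
  have hsmall : ∀ᶠ ρ in 𝓝[>] (0 : ℝ), ρ < ε ∧ ∀ a ∈ F, ∀ b ∈ F, a ≠ b → ρ < dist a b / 2 := by
    refine (eventually_of_mem (Ioo_mem_nhdsGT hε) fun ρ hρ => hρ.2).and ?_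
    refine (eventually_all_finite hF).2 fun a _ => (eventually_all_finite hF).2 fun b _ => ?_
    rcases eq_or_ne a b with rfl | hab
    · exact Eventually.of_forall fun _ h => absurd rfl h
    · exact eventually_of_mem (Ioo_mem_nhdsGT (half_pos (dist_pos.2 hab))) fun ρ hρ _ => hρ.2
  obtain ⟨ρ, ⟨hρε, hρ⟩, hρpos⟩ := (hsmall.and self_mem_nhdsWithin).exists
  refine ⟨ρ, hρpos, hρε.le, fun a ha b hb hab => closedBall_disjoint_closedBall ?_⟩
  linarith [hρ a ha b hb hab]

theorem exists_pos_preimage_closedBall_subset [TopologicalSpace X] [CompactSpace X]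
    [MetricSpace Y] {f : X → Y} (hfc : Continuous f) {y : Y} {U : Set X} (hU : IsOpen U)
    (hyU : f ⁻¹' {y} ⊆ U) : ∃ r > 0, f ⁻¹' closedBall y r ⊆ U := by
  have hy : (f '' Uᶜ)ᶜ ∈ 𝓝 y := by
    refine (hU.isClosed_compl.isCompact.image hfc).isClosed.isOpen_compl.mem_nhds ?_
    rintro ⟨x, hxU, rfl⟩
    exact hxU (hyU rfl)
  obtain ⟨r, hr, hrsub⟩ := nhds_basis_closedBall.mem_iff.mp hy
  refine ⟨r, hr, fun x hx => ?_⟩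
  by_contra hxU
  exact hrsub hx ⟨x, hxU, rfl⟩

theorem exists_fiber_separating_radii [MetricSpace X] [CompactSpace X] [MetricSpace Y]
    {f : X → Y} (hfc : Continuous f) {y : Y} (hfib : (f ⁻¹' {y}).Finite) {ε : ℝ} (hε : 0 < ε) :
    ∃ ρ > 0, ρ ≤ ε ∧
      (f ⁻¹' {y}).Pairwise (fun a b => Disjoint (closedBall a ρ) (closedBall b ρ)) ∧
      ∃ r > 0, f ⁻¹' closedBall y r ⊆ ⋃ a ∈ f ⁻¹' {y}, ball a ρ := by
  obtain ⟨ρ, hρ, hρε, hdisj⟩ := hfib.exists_pos_pairwise_disjoint_closedBall hε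
  exact ⟨ρ, hρ, hρε, hdisj, exists_pos_preimage_closedBall_subset hfc
    (isOpen_biUnion fun a _ => isOpen_ball) fun a ha => mem_biUnion ha (mem_ball_self hρ)⟩

theorem IsPreconnected.exists_subset_of_subset_biUnion [TopologicalSpace X] {ι : Type*}
    {t : Set ι} {s : ι → Set X} (hs : ∀ i ∈ t, IsOpen (s i)) (hdisj : t.PairwiseDisjoint s)
    {Q : Set X} (hQ : IsPreconnected Q) (hQne : Q.Nonempty) (hQt : Q ⊆ ⋃ i ∈ t, s i) :
    ∃ i ∈ t, Q ⊆ s i := by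
  obtain ⟨q, hq⟩ := hQne
  obtain ⟨i, hi, hqi⟩ := mem_iUnion₂.mp (hQt hq)
  refine ⟨i, hi, IsPreconnected.subset_left_of_subset_union (v := ⋃ j ∈ t \ {i}, s j) (hs i hi)
    (isOpen_biUnion fun j hj => hs j hj.1) ?_ ?_ ⟨q, hq, hqi⟩ hQ⟩
  · exact disjoint_iUnion₂_right.mpr fun j hj => hdisj hi hj.1 (Ne.symm hj.2)
  · intro z hz
    obtain ⟨j, hj, hzj⟩ := mem_iUnion₂.mp (hQt hz)
    by_cases hji : j = i
    · exact Or.inl (hji ▸ hzj)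
    · exact Or.inr (mem_biUnion ⟨hj, hji⟩ hzj)

theorem exists_pos_forall_diam_lt [MetricSpace X] [CompactSpace X] [MetricSpace Y]
    {f : X → Y} (hfc : Continuous f) (hfib : ∀ y, (f ⁻¹' {y}).Finite) {ε : ℝ} (hε : 0 < ε) :
    ∃ δ > 0, ∀ Q : Set X, IsPreconnected Q → diam (f '' Q) ≤ δ → diam Q < ε := by
  choose ρ hρ hρε hdisj r hr hrsub using
    fun y => exists_fiber_separating_radii hfc (hfib y) (by positivity : 0 < ε / 3)
  obtain ⟨δ, hδ, hleb⟩ := lebesgue_number_lemma_of_metric (isCompact_range hfc)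
    (c := fun y => ball y (r y)) (fun _ => isOpen_ball)
    fun z _ => mem_iUnion.mpr ⟨z, mem_ball_self (hr z)⟩
  refine ⟨δ / 2, half_pos hδ, fun Q hQ hQδ => ?_⟩
  rcases Q.eq_empty_or_nonempty with rfl | ⟨q, hq⟩
  · simpa using hε
  obtain ⟨y, hy⟩ := hleb (f q) (mem_range_self q)
  have hQy : Q ⊆ f ⁻¹' closedBall y (r y) := by
    intro z hz
    have hzq : dist (f z) (f q) ≤ δ / 2 := (dist_le_diam_of_mem
      ((isCompact_range hfc).isBounded.subset (image_subset_range f Q))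
      (mem_image_of_mem f hz) (mem_image_of_mem f hq)).trans hQδ
    exact ball_subset_closedBall (hy (by rw [mem_ball]; linarith))
  obtain ⟨a, -, hQa⟩ := hQ.exists_subset_of_subset_biUnion (fun _ _ => isOpen_ball)
    (fun a ha b hb hab => (hdisj y ha hb hab).mono ball_subset_closedBall ball_subset_closedBall)
    ⟨q, hq⟩ (hQy.trans (hrsub y))
  calc diam Q ≤ diam (ball a (ρ y)) := diam_mono hQa isBounded_ball
    _ ≤ 2 * ρ y := diam_ball (hρ y).le
    _ < ε := by linarith [hρε y]

theorem finite_setOf_connectedComponentIn_preimage_image_subset [TopologicalSpace X]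
    [CompactSpace X] [T2Space X] [TopologicalSpace Y] [T2Space Y] {f : X → Y}
    (hfc : Continuous f) (hfo : IsOpenMap f) (hfib : ∀ y, (f ⁻¹' {y}).Finite) {K : Set Y}
    (hK : IsClosed K) {y : Y} (hy : y ∈ K) :
    {Q : Set X | (∃ x ∈ f ⁻¹' K, Q = connectedComponentIn (f ⁻¹' K) x) ∧
      f '' Q ⊆ connectedComponentIn K y}.Finite := by
  refine ((hfib y).image (connectedComponentIn (f ⁻¹' K))).subset ?_
  rintro _ ⟨⟨x, hx, rfl⟩, hxy⟩
  set C := connectedComponentIn K y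
  have hxC : x ∈ univ ∩ f ⁻¹' C := ⟨mem_univ x, hxy ⟨x, mem_connectedComponentIn hx, rfl⟩⟩
  obtain ⟨z, hz, hzy⟩ := exists_mem_connectedComponentIn_inter_preimage hfc hfo isOpen_univ
    isPreconnected_connectedComponentIn (((hK.connectedComponentIn y).preimage hfc).isCompact
      |>.inter_left isClosed_univ) hxC (mem_connectedComponentIn hy)
  have hzx : z ∈ connectedComponentIn (f ⁻¹' K) x := connectedComponentIn_mono x
    (inter_subset_right.trans (preimage_mono (connectedComponentIn_subset K y))) hz
  exact ⟨z, hzy, (connectedComponentIn_eq hzx).symm⟩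

theorem locallyConnectedSpace_connectedComponentIn_preimage [MetricSpace X] [CompactSpace X]
    [MetricSpace Y] {f : X → Y} (hfc : Continuous f) (hfo : IsOpenMap f)
    (hfib : ∀ y, (f ⁻¹' {y}).Finite) {K : Set Y} (hK : IsClosed K)
    (hlc : ∀ y ∈ K, LocallyConnectedSpace (connectedComponentIn K y)) (x₀ : X) :
    LocallyConnectedSpace (connectedComponentIn (f ⁻¹' K) x₀) := by
  set Q := connectedComponentIn (f ⁻¹' K) x₀
  rw [locallyConnectedSpace_subtype_iff]
  intro x hxQ U hU
  obtain ⟨ε, hε, hεU⟩ := Metric.mem_nhds_iff.mp hU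
  have hxK : f x ∈ K := connectedComponentIn_subset (f ⁻¹' K) x₀ hxQ
  obtain ⟨ρ, hρ, hρε, hdisj, r, hr, hrsub⟩ := exists_fiber_separating_radii hfc (hfib (f x)) hε
  obtain ⟨W, hW, hWconn, hWsub⟩ := locallyConnectedSpace_subtype_iff.mp (hlc (f x) hxK) (f x)
    (mem_connectedComponentIn hxK) (ball (f x) r) (ball_mem_nhds _ hr)
  obtain ⟨O, hO, hxO, hOW⟩ := mem_nhdsWithin.mp hW
  set D := closure W
  have hDK : D ⊆ K := closure_minimal (hWsub.trans (inter_subset_left.trans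
    (connectedComponentIn_subset K _))) hK
  have hDr : D ⊆ closedBall (f x) r := closure_minimal
    (hWsub.trans (inter_subset_right.trans ball_subset_closedBall)) isClosed_closedBall
  set N := ball x ρ ∩ f ⁻¹' D
  have hfiber : ∀ a ∈ f ⁻¹' {f x}, ∀ z ∈ closedBall x ρ, z ∈ ball a ρ → a = x := by
    intro a ha z hz hza
    by_contra hax
    exact (hdisj ha rfl hax).ne_of_mem (ball_subset_closedBall hza) hz rfl
  -- The closed balls about the fibre are disjoint, so `N = closedBall x ρ ∩ f ⁻¹' D`.
  have hNclosed : IsClosed N := by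
    convert isClosed_closedBall.inter ((isClosed_closure (s := W)).preimage hfc) using 1
    refine Subset.antisymm (inter_subset_inter_left _ ball_subset_closedBall) ?_
    rintro z ⟨hzx, hzD⟩
    obtain ⟨a, ha, hza⟩ := mem_iUnion₂.mp (hrsub (hDr hzD))
    exact ⟨hfiber a ha z hzx hza ▸ hza, hzD⟩
  have hxN : x ∈ N := ⟨mem_ball_self hρ, subset_closure (hOW ⟨hxO, mem_connectedComponentIn hxK⟩)⟩
  have hNconn : IsPreconnected N := by
    suffices N ⊆ connectedComponentIn N x from
      Subset.antisymm this (connectedComponentIn_subset N x) ▸ isPreconnected_connectedComponentIn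
    intro z hz
    obtain ⟨w, hw, hwx⟩ := exists_mem_connectedComponentIn_inter_preimage hfc hfo isOpen_ball
      hWconn.closure hNclosed.isCompact hz hxN.2
    have hwN : w ∈ N := connectedComponentIn_subset N z hw
    rw [hfiber w hwx w (ball_subset_closedBall hwN.1) (mem_ball_self hρ)] at hw
    exact connectedComponentIn_eq hw ▸ mem_connectedComponentIn hz
  have hQx : Q = connectedComponentIn (f ⁻¹' K) x := connectedComponentIn_eq hxQ
  have hNQ : N ⊆ Q := hQx ▸ hNconn.subset_connectedComponentIn hxN fun z hz => hDK hz.2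
  have hfQ : f '' Q ⊆ connectedComponentIn K (f x) :=
    hQx ▸ image_connectedComponentIn_preimage_subset hfc (connectedComponentIn_subset _ _ hxQ)
  refine ⟨N, mem_nhdsWithin.mpr ⟨ball x ρ ∩ f ⁻¹' O, isOpen_ball.inter (hO.preimage hfc),
    ⟨mem_ball_self hρ, hxO⟩, ?_⟩, hNconn,
    subset_inter hNQ (inter_subset_left.trans ((ball_subset_ball hρε).trans hεU))⟩
  rintro z ⟨⟨hzρ, hzO⟩, hzQ⟩
  exact ⟨hzρ, subset_closure (hOW ⟨hzO, hfQ (mem_image_of_mem f hzQ)⟩)⟩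

end

theorem isPeanoCompactumSet_preimage_of_branchedCovering_general
    {S₁ S₂ : Type*}
    [MetricSpace S₁] [CompactSpace S₁]
    [MetricSpace S₂]
    (f : S₁ → S₂) (hf : IsBranchedCovering f)
    (K : Set S₂)
    (hKP : IsPeanoCompactumSet K) :
    IsPeanoCompactumSet (f ⁻¹' K) := by
  obtain ⟨hfc, hfo, -, hfib⟩ := hf
  obtain ⟨hK, hlc, hfin⟩ := hKP
  refine ⟨(hK.isClosed.preimage hfc).isCompact, fun x _ =>
    locallyConnectedSpace_connectedComponentIn_preimage hfc hfo hfib hK.isClosed hlc x,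
    fun ε hε => ?_⟩
  obtain ⟨δ, hδ, hsmall⟩ := exists_pos_forall_diam_lt hfc hfib hε
  -- A component of diameter `> ε` lies over a component of diameter `> δ`.
  refine ((hfin δ hδ).biUnion (t := fun C => {Q | (∃ x ∈ f ⁻¹' K,
    Q = connectedComponentIn (f ⁻¹' K) x) ∧ f '' Q ⊆ C}) fun C hC => ?_).subset ?_
  · obtain ⟨⟨y, hy, rfl⟩, -⟩ := hC
    exact finite_setOf_connectedComponentIn_preimage_image_subset hfc hfo hfib hK.isClosed hy
  · rintro _ ⟨⟨x, hx, rfl⟩, hQε⟩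
    have himg := image_connectedComponentIn_preimage_subset hfc hx
    refine mem_biUnion ⟨⟨f x, hx, rfl⟩, ?_⟩ ⟨⟨x, hx, rfl⟩, himg⟩
    by_contra! hCδ
    refine (hsmall _ isPreconnected_connectedComponentIn ?_).not_gt hQε
    exact (diam_mono himg (hK.isBounded.subset (connectedComponentIn_subset _ _))).trans hCδ

/-- Let `f : S₁ → S₂` be a branched covering between closed surfaces and
`K ⊆ S₂` nonempty compact. If `K` is a Peano compactum (with the restricted metric), then
so is `L = f⁻¹(K)`. -/
theorem isPeanoCompactumSet_preimage_of_branchedCovering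
    {S₁ S₂ : Type*}
    [MetricSpace S₁] [CompactSpace S₁] [ConnectedSpace S₁] [Nonempty S₁]
    [MetricSpace S₂] [CompactSpace S₂] [ConnectedSpace S₂] [Nonempty S₂]
    (hS₁ : IsSurfaceLocallyEuclidean S₁) (hS₂ : IsSurfaceLocallyEuclidean S₂)
    (f : S₁ → S₂) (hf : IsBranchedCovering f)
    (K : Set S₂) (hK : IsCompact K) (hKne : K.Nonempty)
    (hKP : IsPeanoCompactumSet K) :
    IsPeanoCompactumSet (f ⁻¹' K) :=
  isPeanoCompactumSet_preimage_of_branchedCovering_general f hf K hKP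
end

section
/- Let K be a nonempty compact subset of a closed surface S with a fixed metric inducing its topology. Then the Schönflies relation is contained in the relation R̃_K, i.e., R_K ⊆ R̃_K as subsets of K × K. -/
open Set Metric Filter Topology unitInterval

/-- The Schönflies relation of a compact set `K` on a (metric) surface `S`: pairs `(x, x)`
with `x ∈ K`, together with pairs of distinct points `x, y ∈ K` for which there is a
topological embedding `φ` of the square `[0,1]²` into `S` (a marked quadrilateral with
marked sides `I₁ = φ([0,1]×{0})` and `I₂ = φ([0,1]×{1})`) such that
(a) `x ∈ I₁`, `y ∈ I₂` and `K ∩ ∂Q ⊆ I₁ ∪ I₂`;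
(b) `K ∩ Q` has infinitely many pairwise distinct connected components `Qₙ`, each meeting
both `I₁` and `I₂`;
(c) the sequence `(Qₙ)` converges in the Hausdorff metric to a continuum `Q∞` containing
both `x` and `y`. -/
def schonfliesRel {S : Type*} [MetricSpace S] (K : Set S) : Set (S × S) :=
  {p | p.1 ∈ K ∧ p.2 ∈ K ∧ (p.1 = p.2 ∨
    ∃ φ : unitInterval × unitInterval → S, Topology.IsEmbedding φ ∧
      p.1 ∈ φ '' {q | q.2 = 0} ∧ p.2 ∈ φ '' {q | q.2 = 1} ∧
      K ∩ (φ '' {q | q.1 = 0 ∨ q.1 = 1 ∨ q.2 = 0 ∨ q.2 = 1}) ⊆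
        (φ '' {q | q.2 = 0}) ∪ (φ '' {q | q.2 = 1}) ∧
      ∃ Q : ℕ → Set S,
        (∀ m n, m ≠ n → Q m ≠ Q n) ∧
        (∀ n, ∃ z ∈ K ∩ Set.range φ, Q n = connectedComponentIn (K ∩ Set.range φ) z) ∧
        (∀ n, (Q n ∩ φ '' {q | q.2 = 0}).Nonempty ∧ (Q n ∩ φ '' {q | q.2 = 1}).Nonempty) ∧
        ∃ Qinf : Set S, IsCompact Qinf ∧ IsConnected Qinf ∧
          Filter.Tendsto (fun n => Metric.hausdorffDist (Q n) Qinf) Filter.atTop (nhds 0) ∧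
          p.1 ∈ Qinf ∧ p.2 ∈ Qinf)}

/-- The collection of closed equivalence relations on `K` containing a given relation `R`. -/
def closedEquivsOn {S : Type*} [MetricSpace S] (K : Set S) (R : Set (S × S)) :
    Set (Set (S × S)) :=
  {E | R ⊆ E ∧ E ⊆ K ×ˢ K ∧ IsClosed E ∧ (∀ x ∈ K, (x, x) ∈ E) ∧
    (∀ x y, (x, y) ∈ E → (y, x) ∈ E) ∧
    (∀ x y z, (x, y) ∈ E → (y, z) ∈ E → (x, z) ∈ E)}

/-- The Schönflies equivalence `∼_K`: the smallest closed equivalence relation on `K`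
containing the Schönflies relation `R_K`. -/
def schonfliesEquiv {S : Type*} [MetricSpace S] (K : Set S) : Set (S × S) :=
  ⋂₀ closedEquivsOn K (schonfliesRel K)

/-- The Schönflies class `[x]_∼` of a point `x`. -/
def schonfliesClass {S : Type*} [MetricSpace S] (K : Set S) (x : S) : Set S :=
  {y | (x, y) ∈ schonfliesEquiv K}

/-- The decomposition `D_K = {[x]_∼ : x ∈ K}` of `K` into Schönflies classes. -/
def schonfliesDecomp {S : Type*} [MetricSpace S] (K : Set S) : Set (Set S) :=
  {C | ∃ x ∈ K, C = schonfliesClass K x}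

/-- The relation `R̃` on a compactum `X`: pairs `(x, x)` together with pairs of distinct
points `x ≠ y` admitting decreasing sequences of open neighborhoods `(Uₙ)` of `x` and
`(Vₙ)` of `y` with `⋂ₙ Uₙ = {x}`, `⋂ₙ Vₙ = {y}`, such that for every `n` the complement
`X \ (Uₙ ∪ Vₙ)` has infinitely many connected components meeting both `∂Uₙ` and `∂Vₙ`. -/
def rTilde (X : Type*) [TopologicalSpace X] : Set (X × X) :=
  {p | p.1 = p.2 ∨ (p.1 ≠ p.2 ∧ ∃ U V : ℕ → Set X,
    (∀ n, IsOpen (U n) ∧ p.1 ∈ U n) ∧ (∀ n, IsOpen (V n) ∧ p.2 ∈ V n) ∧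
    (∀ n, U (n + 1) ⊆ U n) ∧ (∀ n, V (n + 1) ⊆ V n) ∧
    (⋂ n, U n) = {p.1} ∧ (⋂ n, V n) = {p.2} ∧
    ∀ n, {C : Set X |
      (∃ z ∈ (U n ∪ V n)ᶜ, C = connectedComponentIn ((U n ∪ V n)ᶜ) z) ∧
      (C ∩ frontier (U n)).Nonempty ∧ (C ∩ frontier (V n)).Nonempty}.Infinite)}

/-!
Let `x ≠ y` be related through a quadrilateral `φ`, the distinct components `Qₘ` of
`F = K ∩ φ([0,1]²)` accumulating at `x` and `y`. Take for `Uₙ` the ball of radius `rₙ → 0`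
about `x` together with the collar `thickening rₙ F \ F`, and `Vₙ` likewise about `y`; the
collar shrinks to nothing, so `⋂ₙ Uₙ = {x}`. Since the collar has been removed, `F` is
relatively clopen in `K \ (Uₙ ∪ Vₙ)`, so a component of `K \ (Uₙ ∪ Vₙ)` meeting `Qₘ` lies
in `Qₘ`. For every large `m`, `Qₘ` enters both balls, and the cut-wire theorem gives a
component of `Qₘ` minus the balls reaching both of their closures; the component of
`K \ (Uₙ ∪ Vₙ)` containing it meets `∂Uₙ` and `∂Vₙ`, and distinct `Qₘ` give distinct such
components.
-/

open Function

section Components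

variable {Y : Type*} [TopologicalSpace Y]

theorem IsCompact.connectedComponentIn {C : Set Y} (hC : IsCompact C) (x : Y) :
    IsCompact (connectedComponentIn C x) := by
  by_cases hx : x ∈ C
  · have : CompactSpace C := isCompact_iff_compactSpace.mp hC
    rw [connectedComponentIn_eq_image hx]
    exact isClosed_connectedComponent.isCompact.image continuous_subtype_val
  · rw [connectedComponentIn_eq_empty hx]
    exact isCompact_empty

theorem preimage_val_connectedComponentIn {s F : Set Y} (hF : F ⊆ s) {z : Y} (hz : z ∈ F) :
    ((↑) : s → Y) ⁻¹' connectedComponentIn F z =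
      connectedComponentIn ((↑) ⁻¹' F) ⟨z, hF hz⟩ := by
  have hsub : ∀ {t : Set Y}, t ⊆ F → ((↑) : s → Y) '' ((↑) ⁻¹' t) = t := fun ht =>
    image_preimage_eq_of_subset (by rw [Subtype.range_coe]; exact ht.trans hF)
  apply Subset.antisymm
  · refine IsPreconnected.subset_connectedComponentIn ?_ (mem_connectedComponentIn hz)
      (preimage_mono (connectedComponentIn_subset F z))
    rw [← IsInducing.subtypeVal.isPreconnected_image, hsub (connectedComponentIn_subset F z)]
    exact isPreconnected_connectedComponentIn
  · intro w hw
    have := continuous_subtype_val.continuousOn.mapsTo_connectedComponentIn hz hw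
    rwa [hsub subset_rfl] at this

theorem exists_isClopen_of_disjoint_connectedComponent [CompactSpace Y] [T2Space Y]
    {A B : Set Y} (hA : IsClosed A) (hB : IsClosed B)
    (hAB : ∀ a ∈ A, Disjoint (connectedComponent a) B) :
    ∃ Z : Set Y, IsClopen Z ∧ A ⊆ Z ∧ Disjoint Z B := by
  have himage : ∀ {s : Set Y}, IsClosed s → IsClosed (ConnectedComponents.mk '' s) := fun hs =>
    (hs.isCompact.image ConnectedComponents.continuous_coe).isClosed
  have hsep : ConnectedComponents.mk '' A ⊆ (ConnectedComponents.mk '' B)ᶜ := by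
    rintro _ ⟨a, ha, rfl⟩ ⟨b, hb, hab⟩
    exact disjoint_left.1 (hAB a ha) (ConnectedComponents.coe_eq_coe'.1 hab) hb
  obtain ⟨Z, hZ, hAZ, hZB⟩ :=
    exists_clopen_of_closed_subset_open (himage hA) (himage hB).isOpen_compl hsep
  exact ⟨ConnectedComponents.mk ⁻¹' Z, hZ.preimage ConnectedComponents.continuous_coe,
    fun a ha => hAZ ⟨a, ha, rfl⟩, disjoint_left.2 fun b hbZ hb => hZB hbZ ⟨b, hb, rfl⟩⟩

/-- The cut-wire theorem. Otherwise a clopen subset of `W = Q \ (u ∪ v)` containing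
`W ∩ closure u` and missing `closure v`, together with `Q ∩ closure u`, would disconnect `Q`. -/
theorem exists_connectedComponentIn_diff_meets_closures [T2Space Y]
    {Q u v : Set Y} (hQ : IsPreconnected Q) (hQc : IsCompact Q) (hu : IsOpen u) (hv : IsOpen v)
    (huv : Disjoint (closure u) (closure v)) (hQu : (Q ∩ u).Nonempty) (hQv : (Q ∩ v).Nonempty) :
    ∃ z ∈ Q \ (u ∪ v), (connectedComponentIn (Q \ (u ∪ v)) z ∩ closure u).Nonempty ∧
      (connectedComponentIn (Q \ (u ∪ v)) z ∩ closure v).Nonempty := by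
  set W := Q \ (u ∪ v)
  by_contra! hW
  have : CompactSpace W := isCompact_iff_compactSpace.mp (hQc.diff (hu.union hv))
  obtain ⟨Z, hZ, huZ, hZv⟩ := exists_isClopen_of_disjoint_connectedComponent
    (isClosed_closure.preimage continuous_subtype_val)
    (isClosed_closure.preimage continuous_subtype_val) fun (a : W) (ha : (a : Y) ∈ closure u) =>
      disjoint_left.2 fun b hb hbv => (hW a a.2 ⟨a, mem_connectedComponentIn a.2, ha⟩).subset
        ⟨by rw [connectedComponentIn_eq_image a.2]; exact ⟨b, hb, rfl⟩, hbv⟩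
  set P₁ := Q ∩ closure u ∪ (↑) '' Z
  set P₂ := Q ∩ closure v ∪ (↑) '' Zᶜ
  have hP₁ : IsClosed P₁ := (hQc.isClosed.inter isClosed_closure).union
    (hZ.isClosed.isCompact.image continuous_subtype_val).isClosed
  have hP₂ : IsClosed P₂ := (hQc.isClosed.inter isClosed_closure).union
    (hZ.compl.isClosed.isCompact.image continuous_subtype_val).isClosed
  have hcover : Q ⊆ P₁ ∪ P₂ := by
    intro z hz
    by_cases hzu : z ∈ u
    · exact Or.inl (Or.inl ⟨hz, subset_closure hzu⟩)
    by_cases hzv : z ∈ v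
    · exact Or.inr (Or.inl ⟨hz, subset_closure hzv⟩)
    have hzW : z ∈ W := ⟨hz, fun h => h.elim hzu hzv⟩
    by_cases hzZ : (⟨z, hzW⟩ : W) ∈ Z
    · exact Or.inl (Or.inr ⟨_, hzZ, rfl⟩)
    · exact Or.inr (Or.inr ⟨_, hzZ, rfl⟩)
  have hdisj : Disjoint P₁ P₂ := by
    rw [disjoint_left]
    rintro _ (⟨-, hzu⟩ | ⟨w, hwZ, rfl⟩) (⟨-, hzv⟩ | ⟨w', hw'Z, hw'⟩)
    · exact disjoint_left.1 huv hzu hzv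
    · subst hw'
      exact hw'Z (huZ hzu)
    · exact disjoint_left.1 hZv hwZ hzv
    · exact hw'Z (Subtype.val_injective hw' ▸ hwZ)
  obtain ⟨p, hpQ, hpu⟩ := hQu
  obtain ⟨q, hqQ, hqv⟩ := hQv
  rcases (isPreconnected_iff_subset_of_fully_disjoint_closed hQc.isClosed).1 hQ P₁ P₂
    hP₁ hP₂ hcover hdisj with hQP | hQP
  · exact disjoint_left.1 hdisj (hQP hqQ) (Or.inl ⟨hqQ, subset_closure hqv⟩)
  · exact disjoint_left.1 hdisj (Or.inl ⟨hpQ, subset_closure hpu⟩) (hQP hpQ)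

end Components

section Collar

variable {X : Type*} [MetricSpace X] {C : Set X}

def ballUnionCollar (C : Set X) (a : X) (r : ℝ) : Set X :=
  ball a r ∪ (thickening r C \ C)

theorem isOpen_ballUnionCollar (hC : IsClosed C) (a : X) (r : ℝ) :
    IsOpen (ballUnionCollar C a r) :=
  isOpen_ball.union (isOpen_thickening.sdiff hC)

theorem mem_ballUnionCollar_self {r : ℝ} (hr : 0 < r) (a : X) : a ∈ ballUnionCollar C a r :=
  Or.inl (mem_ball_self hr)

theorem ballUnionCollar_mono (a : X) {r r' : ℝ} (h : r ≤ r') :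
    ballUnionCollar C a r ⊆ ballUnionCollar C a r' :=
  union_subset_union (ball_subset_ball h) (sdiff_subset_sdiff_left (thickening_mono h C))

theorem iInter_ballUnionCollar (hC : IsClosed C) (a : X) {r : ℕ → ℝ} (hr0 : ∀ n, 0 < r n)
    (hr : Tendsto r atTop (𝓝 0)) : ⋂ n, ballUnionCollar C a (r n) = {a} := by
  refine eq_singleton_iff_unique_mem.2
    ⟨mem_iInter.2 fun n => mem_ballUnionCollar_self (hr0 n) a, fun z hz => ?_⟩
  by_contra hza
  have hcollar : ∀ᶠ n in atTop, z ∈ thickening (r n) C \ C := by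
    filter_upwards [hr.eventually (gt_mem_nhds (dist_pos.2 hza))] with n hn
    exact (mem_iInter.1 hz n).resolve_left fun h => lt_asymm (mem_ball.1 h) hn
  obtain ⟨n, -, hzC⟩ := hcollar.exists
  refine hzC (hC.closure_eq ▸ ?_)
  rw [closure_eq_iInter_thickening]
  refine mem_iInter₂.2 fun δ hδ => ?_
  obtain ⟨m, hm, hmδ⟩ := (hcollar.and (hr.eventually (gt_mem_nhds hδ))).exists
  exact thickening_mono hmδ.le C hm.1

theorem IsPreconnected.subset_of_subset_compl_thickening_diff {D : Set X} {r : ℝ}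
    (hD : IsPreconnected D) (hC : IsClosed C) (hr : 0 < r) (hDC : (D ∩ C).Nonempty)
    (hsub : D ⊆ (thickening r C \ C)ᶜ) : D ⊆ C := by
  have hsplit : D ⊆ C ∪ (thickening r C)ᶜ := fun z hz =>
    (em (z ∈ C)).imp id fun hzC hzr => hsub hz ⟨hzr, hzC⟩
  have hdisj : D ∩ (C ∩ (thickening r C)ᶜ) = ∅ :=
    eq_empty_of_forall_notMem fun z hz => hz.2.2 (self_subset_thickening hr C hz.2.1)
  refine (isPreconnected_iff_subset_of_disjoint_closed.1 hD _ _ hC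
    isOpen_thickening.isClosed_compl hsplit hdisj).resolve_right fun hD' => ?_
  obtain ⟨z, hzD, hzC⟩ := hDC
  exact hD' hzD (self_subset_thickening hr C hzC)

theorem exists_connectedComponentIn_compl_ballUnionCollar_subset (hC : IsCompact C) {c x y : X}
    (hc : c ∈ C) {r : ℝ} (hr : 0 < r) (hxy : r + r < dist x y)
    (hx : infDist x (connectedComponentIn C c) < r)
    (hy : infDist y (connectedComponentIn C c) < r) :
    ∃ z ∈ connectedComponentIn C c,
      z ∈ (ballUnionCollar C x r ∪ ballUnionCollar C y r)ᶜ ∧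
      connectedComponentIn (ballUnionCollar C x r ∪ ballUnionCollar C y r)ᶜ z ⊆
        connectedComponentIn C c ∧
      (connectedComponentIn (ballUnionCollar C x r ∪ ballUnionCollar C y r)ᶜ z ∩
        frontier (ballUnionCollar C x r)).Nonempty ∧
      (connectedComponentIn (ballUnionCollar C x r ∪ ballUnionCollar C y r)ᶜ z ∩
        frontier (ballUnionCollar C y r)).Nonempty := by
  set Q := connectedComponentIn C c
  set W := (ballUnionCollar C x r ∪ ballUnionCollar C y r)ᶜ
  have hQC : Q ⊆ C := connectedComponentIn_subset C c
  have hmeets : ∀ a, infDist a Q < r → (Q ∩ ball a r).Nonempty := fun a ha => by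
    obtain ⟨w, hwQ, hw⟩ := (infDist_lt_iff ⟨c, mem_connectedComponentIn hc⟩).1 ha
    exact ⟨w, hwQ, mem_ball'.2 hw⟩
  have hballs : Disjoint (closure (ball x r)) (closure (ball y r)) :=
    (closedBall_disjoint_closedBall hxy).mono closure_ball_subset_closedBall
      closure_ball_subset_closedBall
  obtain ⟨z, hzQ, hzx, hzy⟩ := exists_connectedComponentIn_diff_meets_closures
    isPreconnected_connectedComponentIn (hC.connectedComponentIn c) isOpen_ball isOpen_ball
    hballs (hmeets x hx) (hmeets y hy)
  have hQW : Q \ (ball x r ∪ ball y r) ⊆ W := by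
    rintro w ⟨hwQ, hwb⟩ ((hw | ⟨-, hw⟩) | (hw | ⟨-, hw⟩))
    · exact hwb (Or.inl hw)
    · exact hw (hQC hwQ)
    · exact hwb (Or.inr hw)
    · exact hw (hQC hwQ)
  have hzW : z ∈ W := hQW hzQ
  have hED := connectedComponentIn_mono z hQW
  have hDC : connectedComponentIn W z ⊆ C :=
    isPreconnected_connectedComponentIn.subset_of_subset_compl_thickening_diff hC.isClosed hr
      ⟨z, mem_connectedComponentIn hzW, hQC hzQ.1⟩
      fun w hw hwc => connectedComponentIn_subset W z hw (Or.inl (Or.inr hwc))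
  have hDQ : connectedComponentIn W z ⊆ Q :=
    (isPreconnected_connectedComponentIn.subset_connectedComponentIn
      (mem_connectedComponentIn hzW) hDC).trans (connectedComponentIn_eq hzQ.1).symm.subset
  have hfrontier : ∀ a, ballUnionCollar C a r ⊆ Wᶜ →
      (connectedComponentIn (Q \ (ball x r ∪ ball y r)) z ∩ closure (ball a r)).Nonempty →
      (connectedComponentIn W z ∩ frontier (ballUnionCollar C a r)).Nonempty := by
    rintro a haW ⟨b, hbE, hb⟩
    exact ⟨b, hED hbE, (isOpen_ballUnionCollar hC.isClosed a r).frontier_eq ▸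
      ⟨closure_mono subset_union_left hb,
        fun h => haW h (connectedComponentIn_subset W z (hED hbE))⟩⟩
  exact ⟨z, hzQ.1, hzW, hDQ, hfrontier x (fun _ h hw => hw (Or.inl h)) hzx,
    hfrontier y (fun _ h hw => hw (Or.inr h)) hzy⟩

end Collar

section RTilde

variable {X : Type*} [MetricSpace X]

theorem tendsto_infDist_of_tendsto_hausdorffDist {ι : Type*} {l : Filter ι} {s : ι → Set X}
    {L : Set X} (hs : ∀ i, (s i).Nonempty) (hsb : ∀ i, Bornology.IsBounded (s i))
    (hL : Bornology.IsBounded L)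
    (h : Tendsto (fun i => hausdorffDist (s i) L) l (𝓝 0)) {x : X} (hx : x ∈ L) :
    Tendsto (fun i => infDist x (s i)) l (𝓝 0) :=
  squeeze_zero (fun _ => infDist_nonneg) (fun i => (infDist_le_hausdorffDist_of_mem hx
    (hausdorffEDist_ne_top_of_nonempty_of_bounded ⟨x, hx⟩ (hs i) hL (hsb i))).trans_eq
      hausdorffDist_comm) h

theorem mem_rTilde_of_tendsto_infDist {C : Set X} (hC : IsCompact C) {Q : ℕ → Set X}
    (hQinj : Injective Q) (hQ : ∀ n, ∃ c ∈ C, Q n = connectedComponentIn C c) {x y : X}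
    (hx : Tendsto (fun n => infDist x (Q n)) atTop (𝓝 0))
    (hy : Tendsto (fun n => infDist y (Q n)) atTop (𝓝 0)) : (x, y) ∈ rTilde X := by
  rcases eq_or_ne x y with rfl | hxy
  · exact Or.inl rfl
  choose c hc hQc using hQ
  set r : ℕ → ℝ := fun n => dist x y / (n + 3)
  have hr0 : ∀ n, 0 < r n := fun n => div_pos (dist_pos.2 hxy) (by positivity)
  have hr_succ : ∀ n, r (n + 1) ≤ r n := fun n =>
    div_le_div_of_nonneg_left dist_nonneg (by positivity) (by push_cast; linarith)
  have hr_sep : ∀ n, r n + r n < dist x y := fun n => by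
    have : r n ≤ dist x y / 3 := div_le_div_of_nonneg_left dist_nonneg (by positivity)
      (by linarith [n.cast_nonneg (α := ℝ)])
    linarith [dist_pos.2 hxy]
  have hr_lim : Tendsto r atTop (𝓝 0) := by
    have := (tendsto_add_atTop_iff_nat 3).2 (tendsto_const_div_atTop_nhds_zero_nat (dist x y))
    simpa only [Nat.cast_add, Nat.cast_ofNat] using this
  refine Or.inr ⟨hxy, fun n => ballUnionCollar C x (r n), fun n => ballUnionCollar C y (r n),
    fun n => ⟨isOpen_ballUnionCollar hC.isClosed x (r n), mem_ballUnionCollar_self (hr0 n) x⟩,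
    fun n => ⟨isOpen_ballUnionCollar hC.isClosed y (r n), mem_ballUnionCollar_self (hr0 n) y⟩,
    fun n => ballUnionCollar_mono x (hr_succ n), fun n => ballUnionCollar_mono y (hr_succ n),
    iInter_ballUnionCollar hC.isClosed x hr0 hr_lim,
    iInter_ballUnionCollar hC.isClosed y hr0 hr_lim,
    fun n => ?_⟩
  obtain ⟨N, hN⟩ := eventually_atTop.1
    ((hx.eventually (gt_mem_nhds (hr0 n))).and (hy.eventually (gt_mem_nhds (hr0 n))))
  choose z hzQ hzW hzsub hzx hzy using fun j =>
    exists_connectedComponentIn_compl_ballUnionCollar_subset hC (hc (N + j)) (hr0 n) (hr_sep n)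
      (hQc (N + j) ▸ (hN (N + j) (N.le_add_right j)).1)
      (hQc (N + j) ▸ (hN (N + j) (N.le_add_right j)).2)
  refine infinite_of_injective_forall_mem (fun i j hij => ?_)
    fun j => ⟨⟨z j, hzW j, rfl⟩, hzx j, hzy j⟩
  have hzj : z i ∈ connectedComponentIn C (c (N + j)) :=
    hzsub j (hij ▸ mem_connectedComponentIn (hzW i))
  have : Q (N + i) = Q (N + j) := by
    rw [hQc, hQc, connectedComponentIn_eq (hzQ i), connectedComponentIn_eq hzj]
  exact Nat.add_left_cancel (hQinj this)

end RTilde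

theorem schonfliesRel_subset_rTilde_general
    {S : Type*} [MetricSpace S]
    (K : Set S) (hK : IsCompact K) :
    ∀ (x y : S) (hx : x ∈ K) (hy : y ∈ K), (x, y) ∈ schonfliesRel K →
      ((⟨x, hx⟩ : K), (⟨y, hy⟩ : K)) ∈ rTilde ↥K := by
  rintro x y hx hy
    ⟨-, -, hxy | ⟨φ, hφ, -, -, -, Q, hQne, hQcomp, -, L, hLc, -, hQL, hxL, hyL⟩⟩
  · exact Or.inl (Subtype.ext hxy)
  set F := K ∩ range φ
  have hF : IsCompact F := hK.inter_right (isCompact_range hφ.continuous).isClosed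
  have hQF : ∀ n, Q n ⊆ F := fun n => by
    obtain ⟨c, -, hc⟩ := hQcomp n
    exact hc ▸ connectedComponentIn_subset F c
  have himage : ∀ n, ((↑) : K → S) '' ((↑) ⁻¹' Q n) = Q n := fun n =>
    image_preimage_eq_of_subset (Subtype.range_coe ▸ (hQF n).trans inter_subset_left)
  have hinj : Injective fun n => ((↑) : K → S) ⁻¹' Q n := fun m n hmn => by_contra fun hne =>
    hQne m n hne (by rw [← himage m, ← himage n]; exact congrArg _ hmn)
  have hdist : ∀ a (ha : a ∈ K) n, infDist (⟨a, ha⟩ : K) ((↑) ⁻¹' Q n) = infDist a (Q n) :=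
    fun a ha n => by rw [← infDist_image isometry_subtype_coe, himage]
  have hlim : ∀ a ∈ L, Tendsto (fun n => infDist a (Q n)) atTop (𝓝 0) :=
    fun a ha => tendsto_infDist_of_tendsto_hausdorffDist
      (fun n => (hQcomp n).elim fun c hc => ⟨c, hc.2 ▸ mem_connectedComponentIn hc.1⟩)
      (fun n => hF.isBounded.subset (hQF n)) hLc.isBounded hQL ha
  have : CompactSpace K := isCompact_iff_compactSpace.1 hK
  refine mem_rTilde_of_tendsto_infDist (C := (↑) ⁻¹' F) (Q := fun n => (↑) ⁻¹' Q n)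
    (hF.isClosed.preimage continuous_subtype_val).isCompact hinj (fun n => ?_) ?_ ?_
  · obtain ⟨c, hc, hQc⟩ := hQcomp n
    rw [hQc, preimage_val_connectedComponentIn inter_subset_left hc]
    exact ⟨⟨c, hc.1⟩, hc, rfl⟩
  · simpa only [hdist] using hlim x hxL
  · simpa only [hdist] using hlim y hyL

/-- For a nonempty compact subset `K` of a closed surface `S`, the
Schönflies relation `R_K` is contained in `R̃_K` (as subsets of `K × K`, where `R̃_K`
is taken with respect to the subspace `K`). -/
theorem schonfliesRel_subset_rTilde
    {S : Type*} [MetricSpace S] [CompactSpace S] [ConnectedSpace S] [Nonempty S]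
    (hS : IsSurfaceLocallyEuclidean S)
    (K : Set S) (hK : IsCompact K) (hKne : K.Nonempty) :
    ∀ (x y : S) (hx : x ∈ K) (hy : y ∈ K), (x, y) ∈ schonfliesRel K →
      ((⟨x, hx⟩ : K), (⟨y, hy⟩ : K)) ∈ rTilde ↥K :=
  schonfliesRel_subset_rTilde_general K hK
end

section
/- Let f : S₁ → S₂ be a covering map from a closed surface S₁ onto a closed surface S₂, each equipped with a fixed metric inducing its topology. Let K ⊆ S₂ be a nonempty compact set and L = f⁻¹(K). If x ∈ K, u ∈ f⁻¹(x), and y ∈ R_K(x), then there exists v ∈ R_L(u) with f(v) = y. -/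
open Set Metric Filter Topology unitInterval

/-!
The square is simply connected and locally path connected, so the embedding `φ` of the square
witnessing `(x, y) ∈ R_K` lifts through the covering map to a map `ψ` with `ψ a = u`, where
`φ a = x`. Then `ψ` is again an embedding and `ψ ⁻¹' L = φ ⁻¹' K`. Every set in the witness is the
image under `φ` of a subset of the square, and its image under `ψ` gives a witness for
`(u, ψ b) ∈ R_L`: connected components correspond under embeddings, and Hausdorff convergence
transfers because a compact space has a unique uniformity, so that `φ` is uniformly inducing and
`ψ` is uniformly continuous.
-/

instance : LocallyPathConnectedSpace I :=
  (isQuotientMap_projIcc (a := (0 : ℝ)) (b := 1) (h := zero_le_one)).locallyPathConnectedSpace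

instance : ContractibleSpace I :=
  (convex_Icc (0 : ℝ) 1).contractibleSpace (nonempty_Icc.2 zero_le_one)

section Hausdorff

variable {ι X : Type*} {l : Filter ι} {A : ι → Set X} {B : Set X}

theorem tendsto_hausdorffEDist_of_tendsto_hausdorffDist [PseudoMetricSpace X]
    (hfin : ∀ i, hausdorffEDist (A i) B ≠ ⊤)
    (h : Tendsto (fun i => hausdorffDist (A i) B) l (𝓝 0)) :
    Tendsto (fun i => hausdorffEDist (A i) B) l (𝓝 0) :=
  (ENNReal.tendsto_toReal_iff hfin ENNReal.zero_ne_top).1 h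

theorem tendsto_hausdorffDist_of_tendsto_hausdorffEDist [PseudoMetricSpace X]
    (h : Tendsto (fun i => hausdorffEDist (A i) B) l (𝓝 0)) :
    Tendsto (fun i => hausdorffDist (A i) B) l (𝓝 0) :=
  (ENNReal.tendsto_toReal ENNReal.zero_ne_top).comp h

theorem subset_of_tendsto_hausdorffEDist [PseudoEMetricSpace X] [l.NeBot] {F : Set X}
    (hF : IsClosed F) (hA : ∀ᶠ i in l, A i ⊆ F)
    (h : Tendsto (fun i => hausdorffEDist (A i) B) l (𝓝 0)) : B ⊆ F :=
  let _ := PseudoEMetricSpace.hausdorff (α := X)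
  hF.powerset_hausdorff.mem_of_tendsto (tendsto_iff_edist_tendsto_0.2 h) hA

end Hausdorff

theorem Topology.IsInducing.isUniformInducing_of_compactSpace {α β : Type*} [UniformSpace α]
    [CompactSpace α] [UniformSpace β] {f : α → β} (hf : IsInducing f) : IsUniformInducing f :=
  isUniformInducing_iff_uniformSpace.2 <|
    unique_uniformity_of_compact
      (by rw [UniformSpace.toTopologicalSpace_comap, ← hf.eq_induced]) rfl

theorem tendsto_hausdorffEDist_image_of_isInducing {ι C X Y : Type*} [UniformSpace C]
    [CompactSpace C] [PseudoEMetricSpace X] [PseudoEMetricSpace Y] {φ : C → X} {ψ : C → Y}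
    (hφ : IsInducing φ) (hψ : Continuous ψ) {l : Filter ι} {P : ι → Set C} {P₀ : Set C}
    (h : Tendsto (fun i => hausdorffEDist (φ '' P i) (φ '' P₀)) l (𝓝 0)) :
    Tendsto (fun i => hausdorffEDist (ψ '' P i) (ψ '' P₀)) l (𝓝 0) := by
  let _ := UniformSpace.hausdorff C
  let _ := PseudoEMetricSpace.hausdorff (α := X)
  let _ := PseudoEMetricSpace.hausdorff (α := Y)
  have hP : Tendsto P l (𝓝 P₀) :=
    hφ.isUniformInducing_of_compactSpace.image_hausdorff.isInducing.tendsto_nhds_iff.2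
      (tendsto_iff_edist_tendsto_0.2 h)
  have hψ' := (CompactSpace.uniformContinuous_of_continuous hψ).image_hausdorff.continuous
  exact tendsto_iff_edist_tendsto_0.1 ((hψ'.tendsto P₀).comp hP)

theorem Topology.IsEmbedding.image_connectedComponentIn_preimage {α β : Type*}
    [TopologicalSpace α] [TopologicalSpace β] {φ : α → β} (hφ : IsEmbedding φ) (K : Set β) (p : α) :
    φ '' connectedComponentIn (φ ⁻¹' K) p = connectedComponentIn (K ∩ range φ) (φ p) := by
  by_cases hp : p ∈ φ ⁻¹' K
  · rw [← image_preimage_eq_inter_range]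
    refine (hφ.continuous.continuousOn.image_connectedComponentIn_subset hp).antisymm ?_
    set D := connectedComponentIn (φ '' (φ ⁻¹' K)) (φ p)
    have hD : D ⊆ range φ := (connectedComponentIn_subset _ _).trans (image_subset_range _ _)
    have hpre : φ ⁻¹' D ⊆ connectedComponentIn (φ ⁻¹' K) p := by
      refine IsPreconnected.subset_connectedComponentIn ?_ (mem_connectedComponentIn ?_) ?_
      · rw [← hφ.isInducing.isPreconnected_image, image_preimage_eq_of_subset hD]
        exact isPreconnected_connectedComponentIn
      · exact mem_image_of_mem φ hp
      · intro q hq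
        exact hφ.injective.mem_set_image.1 (connectedComponentIn_subset _ _ hq)
    rw [← image_preimage_eq_of_subset hD]
    exact image_mono hpre
  · rw [connectedComponentIn_eq_empty hp, connectedComponentIn_eq_empty fun h => hp h.1,
      image_empty]

def IsSchonfliesSquare {S : Type*} [MetricSpace S] (K : Set S) (φ : I × I → S) (x y : S) : Prop :=
  IsEmbedding φ ∧ x ∈ φ '' {q | q.2 = 0} ∧ y ∈ φ '' {q | q.2 = 1} ∧
    K ∩ (φ '' {q | q.1 = 0 ∨ q.1 = 1 ∨ q.2 = 0 ∨ q.2 = 1}) ⊆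
      (φ '' {q | q.2 = 0}) ∪ (φ '' {q | q.2 = 1}) ∧
    ∃ Q : ℕ → Set S,
      (∀ m n, m ≠ n → Q m ≠ Q n) ∧
      (∀ n, ∃ z ∈ K ∩ range φ, Q n = connectedComponentIn (K ∩ range φ) z) ∧
      (∀ n, (Q n ∩ φ '' {q | q.2 = 0}).Nonempty ∧ (Q n ∩ φ '' {q | q.2 = 1}).Nonempty) ∧
      ∃ Q₀ : Set S, IsCompact Q₀ ∧ IsConnected Q₀ ∧
        Tendsto (fun n => hausdorffDist (Q n) Q₀) atTop (𝓝 0) ∧ x ∈ Q₀ ∧ y ∈ Q₀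

theorem mem_schonfliesRel_iff {S : Type*} [MetricSpace S] {K : Set S} {x y : S} :
    (x, y) ∈ schonfliesRel K ↔ x ∈ K ∧ y ∈ K ∧ (x = y ∨ ∃ φ, IsSchonfliesSquare K φ x y) :=
  Iff.rfl

theorem Function.Injective.image_inter_image_nonempty_iff {α β : Type*} {g : α → β}
    (hg : Injective g) {s t : Set α} : (g '' s ∩ g '' t).Nonempty ↔ (s ∩ t).Nonempty := by
  rw [← image_inter hg, image_nonempty]

theorem Function.Injective.inter_image_subset_image_iff {α β : Type*} {g : α → β}
    (hg : Injective g) {K : Set β} {s t : Set α} : K ∩ g '' s ⊆ g '' t ↔ g ⁻¹' K ∩ s ⊆ t := by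
  rw [inter_comm, ← image_inter_preimage, image_subset_image_iff hg, inter_comm]

theorem IsSchonfliesSquare.transfer_of_preimage_eq {S T : Type*} [MetricSpace S] [MetricSpace T]
    {K : Set S} {L : Set T} {φ : I × I → S} {ψ : I × I → T} {a b : I × I}
    (h : IsSchonfliesSquare K φ (φ a) (φ b)) (hψ : IsEmbedding ψ) (hKL : φ ⁻¹' K = ψ ⁻¹' L) :
    IsSchonfliesSquare L ψ (ψ a) (ψ b) := by
  obtain ⟨hφ, ha, hb, hbdy, Q, hQne, hQcc, hQsides, Q₀, hQ₀c, hQ₀conn, hlim, haQ₀, hbQ₀⟩ := h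
  choose z hz hQz using hQcc
  choose p hp using fun n => (hz n).2
  set P : ℕ → Set (I × I) := fun n => connectedComponentIn (φ ⁻¹' K) (p n)
  have hQP : ∀ n, Q n = φ '' P n := fun n => by
    rw [hQz, ← hp, hφ.image_connectedComponentIn_preimage]
  have hrange : IsCompact (range φ) := isCompact_range hφ.continuous
  have hlim' : Tendsto (fun n => hausdorffEDist (Q n) Q₀) atTop (𝓝 0) :=
    tendsto_hausdorffEDist_of_tendsto_hausdorffDist (fun n =>
      hausdorffEDist_ne_top_of_nonempty_of_bounded (hQsides n).1.left ⟨_, haQ₀⟩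
        (hrange.isBounded.subset (hQP n ▸ image_subset_range _ _)) hQ₀c.isBounded) hlim
  have hQ₀P : Q₀ = φ '' (φ ⁻¹' Q₀) := (image_preimage_eq_of_subset <|
    subset_of_tendsto_hausdorffEDist hrange.isClosed
      (.of_forall fun n => hQP n ▸ image_subset_range _ _) hlim').symm
  have hmem : ∀ {q : I × I} {s}, φ q ∈ φ '' s → ψ q ∈ ψ '' s := fun hq =>
    mem_image_of_mem ψ (hφ.injective.mem_set_image.1 hq)
  have hside : ∀ {s : Set (I × I)} {c : I}, (φ '' s ∩ φ '' {q | q.2 = c}).Nonempty →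
      (ψ '' s ∩ ψ '' {q | q.2 = c}).Nonempty := fun hs =>
    hψ.injective.image_inter_image_nonempty_iff.2 (hφ.injective.image_inter_image_nonempty_iff.1 hs)
  refine ⟨hψ, hmem ha, hmem hb, ?_, fun n => ψ '' P n, ?_, ?_, ?_, ψ '' (φ ⁻¹' Q₀), ?_, ?_, ?_,
    mem_image_of_mem ψ haQ₀, mem_image_of_mem ψ hbQ₀⟩
  · rw [← image_union, hψ.injective.inter_image_subset_image_iff, ← hKL,
      ← hφ.injective.inter_image_subset_image_iff, image_union]
    exact hbdy
  · intro m n hmn hmn'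
    exact hQne m n hmn (by rw [hQP, hQP, hψ.injective.image_injective hmn'])
  · intro n
    refine ⟨ψ (p n), ⟨?_, mem_range_self _⟩, ?_⟩
    · rw [← mem_preimage, ← hKL, mem_preimage, hp]
      exact (hz n).1
    · rw [← hψ.image_connectedComponentIn_preimage, ← hKL]
  · exact fun n => ⟨hside (hQP n ▸ (hQsides n).1), hside (hQP n ▸ (hQsides n).2)⟩
  · exact (hQ₀c.isClosed.preimage hφ.continuous).isCompact.image hψ.continuous
  · refine ⟨⟨_, mem_image_of_mem ψ haQ₀⟩, ?_⟩
    refine (hφ.isInducing.isPreconnected_image.1 ?_).image ψ hψ.continuous.continuousOn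
    exact hQ₀P ▸ hQ₀conn.isPreconnected
  · refine tendsto_hausdorffDist_of_tendsto_hausdorffEDist ?_
    refine tendsto_hausdorffEDist_image_of_isInducing hφ.isInducing hψ.continuous ?_
    simpa only [← hQP, ← hQ₀P] using hlim'

theorem exists_lift_of_schonfliesRel_coveringMap_general
    {S₁ S₂ : Type*}
    [MetricSpace S₁]
    [MetricSpace S₂]
    (f : S₁ → S₂) (hf : IsCoveringMap f)
    (K : Set S₂)
    (L : Set S₁) (hL : L = f ⁻¹' K)
    (x : S₂) (u : S₁) (hu : f u = x)
    (y : S₂) (hy : (x, y) ∈ schonfliesRel K) :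
    ∃ v : S₁, (u, v) ∈ schonfliesRel L ∧ f v = y := by
  obtain ⟨hxK, hyK, rfl | ⟨φ, hφ⟩⟩ := mem_schonfliesRel_iff.1 hy
  · have huL : u ∈ L := by rw [hL, mem_preimage, hu]; exact hxK
    exact ⟨u, ⟨huL, huL, Or.inl rfl⟩, hu⟩
  obtain ⟨a, -, rfl⟩ := hφ.2.1
  obtain ⟨b, -, rfl⟩ := hφ.2.2.1
  obtain ⟨ψ, ⟨rfl, hfψ⟩, -⟩ := hf.existsUnique_continuousMap_lifts ⟨φ, hφ.1.continuous⟩ a u hu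
  replace hfψ : f ∘ ψ = φ := hfψ
  have hψ : IsEmbedding ψ := .of_comp ψ.continuous hf.continuous (hfψ ▸ hφ.1)
  have hKL : φ ⁻¹' K = ψ ⁻¹' L := by rw [hL, ← preimage_comp, hfψ]
  refine ⟨ψ b, mem_schonfliesRel_iff.2 ⟨?_, ?_, Or.inr ⟨ψ, hφ.transfer_of_preimage_eq hψ hKL⟩⟩,
    congrFun hfψ b⟩
  · rw [← mem_preimage, ← hKL]; exact hxK
  · rw [← mem_preimage, ← hKL]; exact hyK

/-- Let `f : S₁ → S₂` be a (surjective) covering map between closed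
surfaces, `K ⊆ S₂` nonempty compact and `L = f⁻¹(K)`. If `x ∈ K`, `u ∈ f⁻¹(x)` and
`y ∈ R_K(x)`, then there exists `v ∈ R_L(u)` with `f(v) = y`. -/
theorem exists_lift_of_schonfliesRel_coveringMap
    {S₁ S₂ : Type*}
    [MetricSpace S₁] [CompactSpace S₁] [ConnectedSpace S₁] [Nonempty S₁]
    [MetricSpace S₂] [CompactSpace S₂] [ConnectedSpace S₂] [Nonempty S₂]
    (hS₁ : IsSurfaceLocallyEuclidean S₁) (hS₂ : IsSurfaceLocallyEuclidean S₂)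
    (f : S₁ → S₂) (hf : IsCoveringMap f) (hfsurj : Function.Surjective f)
    (K : Set S₂) (hK : IsCompact K) (hKne : K.Nonempty)
    (L : Set S₁) (hL : L = f ⁻¹' K)
    (x : S₂) (hx : x ∈ K) (u : S₁) (hu : f u = x)
    (y : S₂) (hy : (x, y) ∈ schonfliesRel K) :
    ∃ v : S₁, (u, v) ∈ schonfliesRel L ∧ f v = y :=
  exists_lift_of_schonfliesRel_coveringMap_general f hf K L hL x u hu y hy
end

section
/- Let f : X → Y be a continuous open surjection from a compactum X onto a compactum Y, and let R_X ⊆ X × X and R_Y ⊆ Y × Y be reflexive symmetric relations such that f(R_X(x)) ⊇ R_Y(f(x)) for all x ∈ X. Then f(cl(R_X)(x)) ⊇ cl(R_Y)(f(x)) for all x ∈ X, where cl(R_X) denotes the closure of R_X in X × X, cl(R_Y) the closure of R_Y in Y × Y, and for a relation R the fiber is R(x) = {y : (x,y) ∈ R}. -/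
open Set Metric Filter Topology unitInterval

/-! Move the fibre condition to the mixed relation `{(x, f y) | (x, y) ∈ R_X} ⊆ X × Y`: it says
`(f × id)⁻¹ R_Y ⊆ (id × f) R_X`. Taking closures, `f × id` is open, so it pulls the closure of
`R_Y` back into the closure of its preimage, and `id × f` is proper (a continuous map of a compact
space into a Hausdorff space), so closure commutes with its image. -/

theorem preimage_closure_subset_image_closure_of_isOpenMap_of_isProperMap
    {X X' Y Y' : Type*} [TopologicalSpace X] [TopologicalSpace X'] [TopologicalSpace Y]
    [TopologicalSpace Y'] {f : X → Y} {g : X' → Y'} (hf : IsOpenMap f) (hg : IsProperMap g)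
    {R : Set (X × X')} {S : Set (Y × Y')} (hRS : Prod.map f id ⁻¹' S ⊆ Prod.map id g '' R) :
    Prod.map f id ⁻¹' closure S ⊆ Prod.map id g '' closure R :=
  calc Prod.map f id ⁻¹' closure S
      ⊆ closure (Prod.map f id ⁻¹' S) :=
        (hf.prodMap IsOpenMap.id).preimage_closure_subset_closure_preimage
    _ ⊆ closure (Prod.map id g '' R) := closure_mono hRS
    _ = Prod.map id g '' closure R :=
        (isProperMap_id.prodMap hg).isClosedMap.closure_image_eq_of_continuous
          (continuous_id.prodMap hg.continuous) R

theorem image_closure_fiber_superset_general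
    {X Y : Type*} [MetricSpace X] [CompactSpace X]
    [MetricSpace Y]
    (f : X → Y) (hcont : Continuous f) (hopen : IsOpenMap f)
    (RX : Set (X × X)) (RY : Set (Y × Y))
    (hfib : ∀ x : X, {b | (f x, b) ∈ RY} ⊆ f '' {y | (x, y) ∈ RX}) :
    ∀ x : X, {b | (f x, b) ∈ closure RY} ⊆ f '' {y | (x, y) ∈ closure RX} := by
  have hRXY : Prod.map f id ⁻¹' RY ⊆ Prod.map id f '' RX := by
    rintro ⟨x, b⟩ hb
    obtain ⟨y, hy, rfl⟩ := hfib x hb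
    exact ⟨(x, y), hy, rfl⟩
  intro x b hb
  obtain ⟨⟨x', y⟩, hy, hxy⟩ := preimage_closure_subset_image_closure_of_isOpenMap_of_isProperMap
    hopen hcont.isProperMap hRXY (show (x, b) ∈ Prod.map f id ⁻¹' closure RY from hb)
  obtain ⟨rfl, rfl⟩ := Prod.mk.inj hxy
  exact ⟨y, hy, rfl⟩

/-- Let `f : X → Y` be a continuous open surjection between compacta and
let `R_X`, `R_Y` be reflexive symmetric relations with `f(R_X(x)) ⊇ R_Y(f(x))` for all
`x`. Then `f(cl(R_X)(x)) ⊇ cl(R_Y)(f(x))` for all `x`, where closures are taken in the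
product spaces. -/
theorem image_closure_fiber_superset
    {X Y : Type*} [MetricSpace X] [CompactSpace X] [Nonempty X]
    [MetricSpace Y] [CompactSpace Y] [Nonempty Y]
    (f : X → Y) (hcont : Continuous f) (hopen : IsOpenMap f)
    (hsurj : Function.Surjective f)
    (RX : Set (X × X)) (RY : Set (Y × Y))
    (hRXrefl : ∀ x : X, (x, x) ∈ RX)
    (hRXsymm : ∀ x y : X, (x, y) ∈ RX → (y, x) ∈ RX)
    (hRYrefl : ∀ y : Y, (y, y) ∈ RY)
    (hRYsymm : ∀ a b : Y, (a, b) ∈ RY → (b, a) ∈ RY)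
    (hfib : ∀ x : X, {b | (f x, b) ∈ RY} ⊆ f '' {y | (x, y) ∈ RX}) :
    ∀ x : X, {b | (f x, b) ∈ closure RY} ⊆ f '' {y | (x, y) ∈ closure RX} :=
  image_closure_fiber_superset_general f hcont hopen RX RY hfib
end

section
/- Let f : X → Y be a continuous open surjection from a compactum X onto a compactum Y. Let R_X ⊆ X × X and R_Y ⊆ Y × Y be closed reflexive symmetric relations such that f(R_X(x)) ⊇ R_Y(f(x)) for all x ∈ X. Let ∼_X be the minimal closed equivalence relation on X containing R_X (the intersection of all equivalence relations on X that contain R_X and are closed in X × X), and define ∼_Y analogously from R_Y. Then f([x]_{∼_X}) ⊇ [f(x)]_{∼_Y} for all x ∈ X, where [x]_{∼_X} denotes the ∼_X-equivalence class of x and [f(x)]_{∼_Y} the ∼_Y-equivalence class of f(x). -/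
/-!
Let `∼_X` be the minimal closed equivalence relation generated by `R_X` and let `T ⊆ Y × Y`
consist of the pairs `(a, b)` such that every `x ∈ f⁻¹(a)` is `∼_X`-related to some point of
`f⁻¹(b)`. Then `T` is reflexive and transitive because `∼_X` is, and it contains `R_Y` by the
fibre hypothesis. It is closed: its complement is the image of the complement of the compact set
`(id × f)(∼_X)` under the open map `f × id`. Hence `T ∩ T⁻¹` is a closed equivalence relation
containing `R_Y`, so it contains `∼_Y`, which is the claim.
-/

open Set

/-- The minimal closed equivalence relation containing a relation `R` on a topological
space: the intersection of all closed equivalence relations containing `R`. -/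
def minClosedEquiv {Z : Type*} [TopologicalSpace Z] (R : Set (Z × Z)) : Set (Z × Z) :=
  ⋂₀ {E | R ⊆ E ∧ IsClosed E ∧ (∀ z : Z, (z, z) ∈ E) ∧
    (∀ a b : Z, (a, b) ∈ E → (b, a) ∈ E) ∧
    (∀ a b c : Z, (a, b) ∈ E → (b, c) ∈ E → (a, c) ∈ E)}

section minClosedEquiv

variable {Z : Type*} [TopologicalSpace Z] {R : Set (Z × Z)}

lemma subset_minClosedEquiv : R ⊆ minClosedEquiv R :=
  fun _ hp => mem_sInter.2 fun _ hE => hE.1 hp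

lemma isClosed_minClosedEquiv : IsClosed (minClosedEquiv R) :=
  isClosed_sInter fun _ hE => hE.2.1

lemma mk_self_mem_minClosedEquiv (z : Z) : (z, z) ∈ minClosedEquiv R :=
  mem_sInter.2 fun _ hE => hE.2.2.1 z

lemma minClosedEquiv_trans {a b c : Z} (hab : (a, b) ∈ minClosedEquiv R)
    (hbc : (b, c) ∈ minClosedEquiv R) : (a, c) ∈ minClosedEquiv R :=
  mem_sInter.2 fun E hE => hE.2.2.2.2 a b c (mem_sInter.1 hab E hE) (mem_sInter.1 hbc E hE)

lemma minClosedEquiv_subset {E : Set (Z × Z)} (hRE : R ⊆ E) (hE : IsClosed E)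
    (hrefl : ∀ z, (z, z) ∈ E) (hsymm : ∀ a b, (a, b) ∈ E → (b, a) ∈ E)
    (htrans : ∀ a b c, (a, b) ∈ E → (b, c) ∈ E → (a, c) ∈ E) :
    minClosedEquiv R ⊆ E :=
  sInter_subset_of_mem ⟨hRE, hE, hrefl, hsymm, htrans⟩

end minClosedEquiv

section transferRel

variable {X Y : Type*} (f : X → Y) (E : Set (X × X))

def transferRel : Set (Y × Y) :=
  {p | ∀ x, f x = p.1 → ∃ x', (x, x') ∈ E ∧ f x' = p.2}

variable {f E}

lemma transferRel_eq_compl_image :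
    transferRel f E = (Prod.map f id '' (Prod.map id f '' E)ᶜ)ᶜ := by
  ext ⟨a, b⟩
  simp only [transferRel, mem_ofPred_eq, mem_compl_iff, mem_image, Prod.exists, Prod.map_apply,
    id_eq, Prod.mk.injEq, not_exists, not_and]
  constructor
  · rintro h x b' hxb' hx rfl
    obtain ⟨x', hxx', hfx'⟩ := h x hx
    exact hxb' x x' hxx' rfl hfx'
  · intro h x hx
    by_contra hne
    exact h x b (fun x₀ x' hxx' hx₀ hfx' => hne ⟨x', hx₀ ▸ hxx', hfx'⟩) hx rfl

lemma isClosed_transferRel [TopologicalSpace X] [CompactSpace X] [T2Space X]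
    [TopologicalSpace Y] [T2Space Y] (hf : Continuous f) (hfo : IsOpenMap f)
    (hE : IsClosed E) : IsClosed (transferRel f E) := by
  have hS : IsClosed (Prod.map id f '' E) :=
    (hE.isCompact.image (continuous_id.prodMap hf)).isClosed
  rw [transferRel_eq_compl_image]
  exact (hfo.prodMap IsOpenMap.id _ hS.isOpen_compl).isClosed_compl

lemma mk_self_mem_transferRel (hrefl : ∀ x, (x, x) ∈ E) (y : Y) : (y, y) ∈ transferRel f E :=
  fun x hx => ⟨x, hrefl x, hx⟩

lemma transferRel_trans (htrans : ∀ a b c, (a, b) ∈ E → (b, c) ∈ E → (a, c) ∈ E) {a b c : Y}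
    (hab : (a, b) ∈ transferRel f E) (hbc : (b, c) ∈ transferRel f E) :
    (a, c) ∈ transferRel f E := by
  intro x hx
  obtain ⟨x', hxx', hfx'⟩ := hab x hx
  obtain ⟨x'', hx'x'', hfx''⟩ := hbc x' hfx'
  exact ⟨x'', htrans x x' x'' hxx' hx'x'', hfx''⟩

end transferRel

lemma minClosedEquiv_subset_transferRel {X Y : Type*} [TopologicalSpace X] [CompactSpace X]
    [T2Space X] [TopologicalSpace Y] [T2Space Y] {f : X → Y} (hf : Continuous f)
    (hfo : IsOpenMap f) {RX : Set (X × X)} {RY : Set (Y × Y)}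
    (hRYsymm : ∀ a b, (a, b) ∈ RY → (b, a) ∈ RY)
    (hfib : ∀ x, {b | (f x, b) ∈ RY} ⊆ f '' {y | (x, y) ∈ RX}) :
    minClosedEquiv RY ⊆ transferRel f (minClosedEquiv RX) := by
  set T := transferRel f (minClosedEquiv RX)
  have hRYT : RY ⊆ T := by
    rintro ⟨a, b⟩ hab x rfl
    obtain ⟨y, hy, hfy⟩ := hfib x hab
    exact ⟨y, subset_minClosedEquiv hy, hfy⟩
  have hT : IsClosed T := isClosed_transferRel hf hfo isClosed_minClosedEquiv
  have hrefl : ∀ y, (y, y) ∈ T := mk_self_mem_transferRel mk_self_mem_minClosedEquiv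
  have htrans : ∀ a b c, (a, b) ∈ T → (b, c) ∈ T → (a, c) ∈ T := fun _ _ _ =>
    transferRel_trans fun _ _ _ => minClosedEquiv_trans
  have hsub : minClosedEquiv RY ⊆ T ∩ Prod.swap ⁻¹' T :=
    minClosedEquiv_subset (fun p hp => ⟨hRYT hp, hRYT (hRYsymm p.1 p.2 hp)⟩)
      (hT.inter (hT.preimage continuous_swap)) (fun y => ⟨hrefl y, hrefl y⟩)
      (fun _ _ h => ⟨h.2, h.1⟩)
      (fun a b c h₁ h₂ => ⟨htrans a b c h₁.1 h₂.1, htrans c b a h₂.2 h₁.2⟩)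
  exact hsub.trans inter_subset_left

theorem image_minClosedEquiv_class_superset_general
    {X Y : Type*} [MetricSpace X] [CompactSpace X]
    [MetricSpace Y]
    (f : X → Y) (hcont : Continuous f) (hopen : IsOpenMap f)
    (RX : Set (X × X)) (RY : Set (Y × Y))
    (hRYsymm : ∀ a b : Y, (a, b) ∈ RY → (b, a) ∈ RY)
    (hfib : ∀ x : X, {b | (f x, b) ∈ RY} ⊆ f '' {y | (x, y) ∈ RX}) :
    ∀ x : X, {b | (f x, b) ∈ minClosedEquiv RY} ⊆
      f '' {y | (x, y) ∈ minClosedEquiv RX} :=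
  fun x _ hb => minClosedEquiv_subset_transferRel hcont hopen hRYsymm hfib hb x rfl

/-- Let `f : X → Y` be a continuous open surjection between compacta and
let `R_X`, `R_Y` be closed reflexive symmetric relations with `f(R_X(x)) ⊇ R_Y(f(x))` for
all `x`. If `∼_X` and `∼_Y` are the minimal closed equivalence relations containing `R_X`
resp. `R_Y`, then `f([x]_{∼_X}) ⊇ [f(x)]_{∼_Y}` for all `x ∈ X`. -/
theorem image_minClosedEquiv_class_superset
    {X Y : Type*} [MetricSpace X] [CompactSpace X] [Nonempty X]
    [MetricSpace Y] [CompactSpace Y] [Nonempty Y]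
    (f : X → Y) (hcont : Continuous f) (hopen : IsOpenMap f)
    (hsurj : Function.Surjective f)
    (RX : Set (X × X)) (RY : Set (Y × Y))
    (hRXcl : IsClosed RX) (hRYcl : IsClosed RY)
    (hRXrefl : ∀ x : X, (x, x) ∈ RX)
    (hRXsymm : ∀ x y : X, (x, y) ∈ RX → (y, x) ∈ RX)
    (hRYrefl : ∀ y : Y, (y, y) ∈ RY)
    (hRYsymm : ∀ a b : Y, (a, b) ∈ RY → (b, a) ∈ RY)
    (hfib : ∀ x : X, {b | (f x, b) ∈ RY} ⊆ f '' {y | (x, y) ∈ RX}) :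
    ∀ x : X, {b | (f x, b) ∈ minClosedEquiv RY} ⊆
      f '' {y | (x, y) ∈ minClosedEquiv RX} :=
  image_minClosedEquiv_class_superset_general f hcont hopen RX RY hRYsymm hfib
end

section
/- Let K₀ = (({0} ∪ {1/n : n ∈ ℕ, n ≥ 1}) × [0,1]²) ∪ ([0,1]² × {0}) ⊆ ℝ³, and let D₁ be the partition of K₀ consisting of the line segments {0} × {t} × [0,1] for t ∈ [0,1] together with all singletons {(x₁,x₂,x₃)} with (x₁,x₂,x₃) ∈ K₀ and x₁ > 0. Then D₁ is an atomic decomposition of K₀ with Peano quotient: D₁ is a Peano decomposition of K₀, and no Peano decomposition of K₀ other than D₁ refines D₁. -/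
open Set Metric Filter Topology unitInterval

/-- The continuum
`K₀ = (({0} ∪ {1/n : n ≥ 1}) × [0,1]²) ∪ ([0,1]² × {0}) ⊆ ℝ³`. -/
def Kzero : Set (ℝ × ℝ × ℝ) :=
  ((insert (0 : ℝ) {x : ℝ | ∃ n : ℕ, x = 1 / (n + 1)}) ×ˢ
      (Set.Icc (0 : ℝ) 1 ×ˢ Set.Icc (0 : ℝ) 1)) ∪
    (Set.Icc (0 : ℝ) 1 ×ˢ (Set.Icc (0 : ℝ) 1 ×ˢ ({0} : Set ℝ)))

/-- The decomposition `D₁` of `K₀`: the segments `{0} × {t} × [0,1]` for `t ∈ [0,1]`,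
together with all singletons `{(x₁, x₂, x₃)}` of points of `K₀` with `x₁ > 0`. -/
def Done : Set (Set (ℝ × ℝ × ℝ)) :=
  {δ | (∃ t ∈ Set.Icc (0 : ℝ) 1,
      δ = ({0} : Set ℝ) ×ˢ (({t} : Set ℝ) ×ˢ Set.Icc (0 : ℝ) 1)) ∨
    (∃ p ∈ Kzero, 0 < p.1 ∧ δ = {p})}

/-!
Scaling the height by the first coordinate, `squash (x, y, z) = (x, y, x * z)`, collapses exactly
the segments `{0} × {t} × [0,1]` of `D₁`, so `D₁` is the decomposition of `K₀` into the fibres of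
`squash` and its quotient is homeomorphic to `K₁ = squash '' K₀`: the base square with the squares
`{1/(n+1)} × [0,1] × [0,1/(n+1)]` standing on it, a locally connected continuum.

A Peano decomposition `D` refining `D₁` can only cut segments into pieces. If a piece `δ` missed
the foot `(0, t, 0)` of its segment, local connectedness of the quotient would give a connected
open set of `K₀` around `δ` staying above the base; it contains points of the squares
`x = 1/(n+1)` close to `δ`, so its first coordinates fill an interval inside the countable set
`{0} ∪ {1/(n+1)}`. Hence every piece contains the foot, and disjointness leaves a single piece.
-/

namespace IsPeanoCompactumSp

variable {Q : Type*} [TopologicalSpace Q]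

theorem of_locallyConnectedSpace [CompactSpace Q] [ConnectedSpace Q] [LocallyConnectedSpace Q]
    [TopologicalSpace.MetrizableSpace Q] : IsPeanoCompactumSp Q := by
  let m : MetricSpace Q := TopologicalSpace.metrizableSpaceMetric Q
  refine ⟨inferInstance, fun y => ?_, m, rfl, fun ε _ => ?_⟩
  · rw [PreconnectedSpace.connectedComponent_eq_univ]
    exact isOpen_univ.locallyConnectedSpace
  · refine (Set.finite_singleton (univ : Set Q)).subset ?_
    rintro C ⟨⟨y, rfl⟩, -⟩
    exact PreconnectedSpace.connectedComponent_eq_univ y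

theorem locallyConnectedSpace [ConnectedSpace Q] (h : IsPeanoCompactumSp Q) :
    LocallyConnectedSpace Q := by
  obtain ⟨-, hloc, -⟩ := h
  have := hloc (Classical.arbitrary Q)
  rw [PreconnectedSpace.connectedComponent_eq_univ] at this
  exact (Homeomorph.Set.univ Q).symm.isOpenEmbedding.locallyConnectedSpace

theorem metrizableSpace (h : IsPeanoCompactumSp Q) : TopologicalSpace.MetrizableSpace Q := by
  obtain ⟨-, -, m, rfl, -⟩ := h
  infer_instance

end IsPeanoCompactumSp

theorem Topology.IsInducing.isConnected_image {X Y : Type*} [TopologicalSpace X]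
    [TopologicalSpace Y] {f : X → Y} (hf : IsInducing f) {s : Set X} :
    IsConnected (f '' s) ↔ IsConnected s := by
  rw [IsConnected, IsConnected, image_nonempty, hf.isPreconnected_image]

theorem Topology.IsQuotientMap.isConnected_preimage_of_isOpen {X Y : Type*} [TopologicalSpace X]
    [TopologicalSpace Y] {f : X → Y} (hf : IsQuotientMap f)
    (hfib : ∀ y, IsConnected (f ⁻¹' {y})) {s : Set Y} (hs : IsOpen s) (hsc : IsConnected s) :
    IsConnected (f ⁻¹' s) := by
  have := isConnected_iff_connectedSpace.mp hsc
  have hfib' : ∀ y : s, IsConnected (s.restrictPreimage f ⁻¹' {y}) := fun y => by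
    rw [← IsInducing.subtypeVal.isConnected_image, image_val_preimage_restrictPreimage,
      image_singleton]
    exact hfib y
  have := (hf.restrictPreimage_isOpen hs).isCoinducing.isConnected_preimage_of_isClosed hfib'
    isClosed_univ isConnected_univ
  rwa [preimage_univ, ← IsInducing.subtypeVal.isConnected_image, image_univ,
    Subtype.range_coe] at this

theorem exists_isOpen_isConnected_preimage_subset {X Y : Type*} [TopologicalSpace X]
    [CompactSpace X] [TopologicalSpace Y] [T2Space Y] [LocallyConnectedSpace Y] {f : X → Y}
    (hf : Continuous f) {U : Set X} (hU : IsOpen U) {x : X} (hx : f ⁻¹' {f x} ⊆ U) :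
    ∃ N : Set Y, IsOpen N ∧ IsConnected N ∧ f x ∈ N ∧ f ⁻¹' N ⊆ U := by
  have hW : IsOpen (f '' Uᶜ)ᶜ :=
    ((hU.isClosed_compl.isCompact.image hf).isClosed).isOpen_compl
  have hxW : f x ∉ f '' Uᶜ := fun ⟨y, hyU, hyx⟩ => hyU (hx hyx)
  obtain ⟨N, hNW, hN, hxN, hNc⟩ :=
    locallyConnectedSpace_iff_subsets_isOpen_isConnected.mp ‹_› (f x) _ (hW.mem_nhds hxW)
  exact ⟨N, hN, hNc, hxN, fun y hy => by_contra fun hyU => hNW hy ⟨y, hyU, rfl⟩⟩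

section Decomposition

variable {X : Type*} [TopologicalSpace X] {K : Set X} {D : Set (Set X)}

namespace IsUSCDecomp

theorem eq_of_mem (hD : IsUSCDecomp K D) {δ δ' : Set X} (hδ : δ ∈ D) (hδ' : δ' ∈ D) {x : X}
    (hx : x ∈ δ) (hx' : x ∈ δ') : δ = δ' :=
  by_contra fun h => Set.disjoint_left.mp (hD.2.1 δ hδ δ' hδ' h) hx hx'

theorem exists_mem (hD : IsUSCDecomp K D) {x : X} (hx : x ∈ K) : ∃ δ ∈ D, x ∈ δ := by
  rw [← hD.2.2.1] at hx
  exact hx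

theorem equivalence_decompRel (hD : IsUSCDecomp K D) : Equivalence (decompRel K D) := by
  refine ⟨fun x => ?_, fun ⟨δ, hδ, hx, hy⟩ => ⟨δ, hδ, hy, hx⟩, ?_⟩
  · obtain ⟨δ, hδ, hx⟩ := hD.exists_mem x.2
    exact ⟨δ, hδ, hx, hx⟩
  · rintro x y z ⟨δ, hδ, hx, hy⟩ ⟨δ', hδ', hy', hz⟩
    exact ⟨δ, hδ, hx, hD.eq_of_mem hδ' hδ hy' hy ▸ hz⟩

theorem preimage_mk_eq (hD : IsUSCDecomp K D) {δ : Set X} (hδ : δ ∈ D) {x : K} (hx : x.1 ∈ δ) :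
    Quot.mk (decompRel K D) ⁻¹' {Quot.mk _ x} = Subtype.val ⁻¹' δ := by
  ext y
  simp only [mem_preimage, mem_singleton_iff, hD.equivalence_decompRel.quot_mk_eq_iff]
  constructor
  · rintro ⟨δ', hδ', hy, hx'⟩
    exact hD.eq_of_mem hδ' hδ hx' hx ▸ hy
  · exact fun hy => ⟨δ, hδ, hy, hx⟩

theorem eq_of_subset {D' : Set (Set X)} (hD' : IsUSCDecomp K D') (hcover : ⋃₀ D = K)
    (h : D ⊆ D') : D = D' := by
  refine h.antisymm fun δ' hδ' => ?_
  obtain ⟨x, hx⟩ := (hD'.1 δ' hδ').1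
  obtain ⟨δ, hδ, hxδ⟩ := hcover.symm ▸ (hD'.1 δ' hδ').2.2 hx
  exact hD'.eq_of_mem (h hδ) hδ' hxδ hx ▸ hδ

end IsUSCDecomp

theorem IsUSCDecompCont.isConnected_preimage_mk (hD : IsUSCDecompCont K D)
    (y : DecompQuot K D) : IsConnected (Quot.mk (decompRel K D) ⁻¹' {y}) := by
  obtain ⟨x, rfl⟩ := Quot.exists_rep y
  obtain ⟨δ, hδ, hx⟩ := hD.1.exists_mem x.2
  rw [hD.1.preimage_mk_eq hδ hx, ← IsInducing.subtypeVal.isConnected_image,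
    Subtype.image_preimage_coe, inter_eq_right.mpr ((hD.1.1 δ hδ).2.2)]
  exact hD.2 δ hδ

end Decomposition

section FiberDecomp

variable {X Y : Type*}

def fiberDecomp (F : X → Y) (K : Set X) : Set (Set X) :=
  (fun x => K ∩ F ⁻¹' {F x}) '' K

variable {F : X → Y} {K : Set X}

theorem decompRel_fiberDecomp_iff {x y : K} :
    decompRel K (fiberDecomp F K) x y ↔ F x = F y := by
  constructor
  · rintro ⟨-, ⟨z, -, rfl⟩, ⟨-, hx⟩, ⟨-, hy⟩⟩
    exact hx.trans hy.symm
  · exact fun h => ⟨_, ⟨x, x.2, rfl⟩, ⟨x.2, rfl⟩, ⟨y.2, h.symm⟩⟩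

variable [TopologicalSpace X] [TopologicalSpace Y]

theorem isUSCDecomp_fiberDecomp [T2Space X] [T2Space Y] (hF : Continuous F) (hK : IsCompact K) :
    IsUSCDecomp K (fiberDecomp F K) := by
  refine ⟨?_, ?_, ?_, ?_⟩
  · rintro - ⟨x, hx, rfl⟩
    exact ⟨⟨x, hx, rfl⟩, hK.isClosed.inter (isClosed_singleton.preimage hF), inter_subset_left⟩
  · rintro - ⟨x, -, rfl⟩ - ⟨y, -, rfl⟩ hne
    refine Set.disjoint_left.mpr fun z ⟨_, hzx⟩ ⟨_, hzy⟩ => hne ?_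
    dsimp only
    rw [← mem_singleton_iff.mp hzx, ← mem_singleton_iff.mp hzy]
  · refine (sUnion_subset ?_).antisymm fun x hx => ⟨_, ⟨x, hx, rfl⟩, hx, rfl⟩
    rintro - ⟨x, -, rfl⟩
    exact inter_subset_left
  · rintro - ⟨x, hx, rfl⟩ U hU hxU
    -- the fibres over the complement of the compact set `F '' (K \ U)` lie in `U`
    set W := (F '' (K \ U))ᶜ
    have hW : IsOpen W := ((hK.diff hU).image hF).isClosed.isOpen_compl
    have hxW : F x ∈ W := fun ⟨y, ⟨hyK, hyU⟩, hyx⟩ => hyU (hxU ⟨hyK, hyx⟩)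
    refine ⟨(fun y => K ∩ F ⁻¹' {F y}) '' (K ∩ F ⁻¹' W), image_mono inter_subset_left,
      ⟨F ⁻¹' W, hW.preimage hF, ?_⟩, ?_, ?_⟩
    · refine (sUnion_subset ?_).antisymm fun y ⟨hyW, hyK⟩ => ⟨_, ⟨y, ⟨hyK, hyW⟩, rfl⟩, hyK, rfl⟩
      rintro - ⟨y, ⟨-, hyW⟩, rfl⟩ z ⟨hzK, hzy⟩
      exact ⟨mem_preimage.mpr (mem_singleton_iff.mp hzy ▸ hyW), hzK⟩
    · exact subset_sUnion_of_mem ⟨x, ⟨hx, hxW⟩, rfl⟩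
    · rintro z ⟨-, ⟨y, ⟨-, hyW⟩, rfl⟩, hzK, hzy⟩
      by_contra hzU
      exact hyW ⟨z, ⟨hzK, hzU⟩, hzy⟩

theorem nonempty_homeomorph_decompQuot_fiberDecomp [T2Space Y] (hF : Continuous F)
    (hK : IsCompact K) : Nonempty (DecompQuot K (fiberDecomp F K) ≃ₜ F '' K) := by
  have := isCompact_iff_compactSpace.mp hK
  let g : DecompQuot K (fiberDecomp F K) → F '' K :=
    Quot.lift (K.imageFactorization F) fun x y h =>
      Subtype.ext (decompRel_fiberDecomp_iff.mp h)
  have hg : Function.Bijective g := by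
    refine ⟨fun a b hab => ?_, (Quot.surjective_lift _).mpr imageFactorization_surjective⟩
    obtain ⟨x, rfl⟩ := Quot.exists_rep a
    obtain ⟨y, rfl⟩ := Quot.exists_rep b
    exact Quot.sound (decompRel_fiberDecomp_iff.mpr (congrArg Subtype.val hab))
  exact ⟨(continuous_quot_lift _ ((hF.comp continuous_subtype_val).subtype_mk _)
    ).homeoOfEquivCompactToT2 (f := Equiv.ofBijective g hg)⟩

end FiberDecomp

def recipSucc : Set ℝ := insert 0 {x | ∃ n : ℕ, x = 1 / (n + 1)}

theorem recipSucc_subset_Icc : recipSucc ⊆ Icc 0 1 := by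
  rintro x (rfl | ⟨n, rfl⟩)
  · exact ⟨le_rfl, zero_le_one⟩
  · exact ⟨by positivity, div_le_one_of_le₀ (by simp) (by positivity)⟩

theorem recipSucc_eq : recipSucc = insert 0 (range fun n : ℕ => 1 / ((n : ℝ) + 1)) := by
  simp only [recipSucc, range, eq_comm]

theorem isCompact_recipSucc : IsCompact recipSucc := by
  rw [recipSucc_eq]
  exact tendsto_one_div_add_atTop_nhds_zero_nat.isCompact_insert_range

theorem countable_recipSucc : recipSucc.Countable := by
  rw [recipSucc_eq]
  exact (countable_range _).insert 0

theorem mem_Kzero {p : ℝ × ℝ × ℝ} :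
    p ∈ Kzero ↔ p.1 ∈ Icc 0 1 ∧ p.2.1 ∈ Icc 0 1 ∧ p.2.2 ∈ Icc 0 1 ∧
      (p.2.2 = 0 ∨ p.1 ∈ recipSucc) := by
  simp only [Kzero, mem_union, mem_prod, mem_singleton_iff]
  constructor
  · rintro (⟨h1, h2, h3⟩ | ⟨h1, h2, h3⟩)
    · exact ⟨recipSucc_subset_Icc h1, h2, h3, Or.inr h1⟩
    · exact ⟨h1, h2, by simp [h3], Or.inl h3⟩
  · rintro ⟨h1, h2, h3, h | h⟩
    · exact Or.inr ⟨h1, h2, h⟩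
    · exact Or.inl ⟨h, h2, h3⟩

theorem isCompact_Kzero : IsCompact Kzero :=
  (isCompact_recipSucc.prod (isCompact_Icc.prod isCompact_Icc)).union
    (isCompact_Icc.prod (isCompact_Icc.prod isCompact_singleton))

theorem isConnected_Kzero : IsConnected Kzero := by
  set base : Set (ℝ × ℝ × ℝ) := Icc 0 1 ×ˢ Icc 0 1 ×ˢ {0}
  have hbase : IsPreconnected base :=
    ((convex_Icc _ _).prod ((convex_Icc _ _).prod (convex_singleton _))).isPreconnected
  have h0 : ((0 : ℝ), (0 : ℝ), (0 : ℝ)) ∈ base :=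
    ⟨⟨le_rfl, zero_le_one⟩, ⟨le_rfl, zero_le_one⟩, rfl⟩
  refine ⟨⟨_, subset_union_right h0⟩, isPreconnected_of_forall (0, 0, 0) fun p hp => ?_⟩
  rcases hp with ⟨h1, h2, h3⟩ | hp
  · refine ⟨{p.1} ×ˢ Icc 0 1 ×ˢ Icc 0 1 ∪ base, union_subset ?_ subset_union_right,
      Or.inr h0, Or.inl ⟨rfl, h2, h3⟩, ?_⟩
    · exact prod_mono (singleton_subset_iff.mpr h1) subset_rfl |>.trans subset_union_left
    refine IsPreconnected.union (p.1, 0, 0) ⟨rfl, ⟨le_rfl, zero_le_one⟩, ⟨le_rfl, zero_le_one⟩⟩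
      ⟨recipSucc_subset_Icc h1, ⟨le_rfl, zero_le_one⟩, rfl⟩ ?_ hbase
    exact ((convex_singleton _).prod ((convex_Icc _ _).prod (convex_Icc _ _))).isPreconnected
  · exact ⟨base, subset_union_right, h0, hp, hbase⟩

def vertSeg (t : ℝ) : Set (ℝ × ℝ × ℝ) :=
  ({0} : Set ℝ) ×ˢ (({t} : Set ℝ) ×ˢ Icc (0 : ℝ) 1)

theorem mem_vertSeg {t : ℝ} {p : ℝ × ℝ × ℝ} :
    p ∈ vertSeg t ↔ p.1 = 0 ∧ p.2.1 = t ∧ p.2.2 ∈ Icc 0 1 := by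
  simp only [vertSeg, mem_prod, mem_singleton_iff]

def squash (p : ℝ × ℝ × ℝ) : ℝ × ℝ × ℝ := (p.1, p.2.1, p.1 * p.2.2)

theorem continuous_squash : Continuous squash := by
  unfold squash
  fun_prop

theorem Kzero_inter_squash_preimage_of_fst_eq_zero {p : ℝ × ℝ × ℝ} (hp : p ∈ Kzero)
    (h0 : p.1 = 0) : Kzero ∩ squash ⁻¹' {squash p} = vertSeg p.2.1 := by
  obtain ⟨a, b, c⟩ := p
  obtain ⟨-, hb, -⟩ := mem_Kzero.mp hp
  dsimp only at h0 hb ⊢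
  subst h0
  ext ⟨x, y, z⟩
  simp only [mem_inter_iff, mem_preimage, mem_singleton_iff, squash, Prod.mk.injEq, zero_mul,
    mem_Kzero, mem_vertSeg]
  constructor
  · rintro ⟨⟨-, -, hz, -⟩, rfl, rfl, -⟩
    exact ⟨rfl, rfl, hz⟩
  · rintro ⟨rfl, rfl, hz⟩
    exact ⟨⟨⟨le_rfl, zero_le_one⟩, hb, hz, Or.inr (mem_insert 0 _)⟩, rfl, rfl, zero_mul z⟩

theorem Kzero_inter_squash_preimage_of_fst_ne_zero {p : ℝ × ℝ × ℝ} (hp : p ∈ Kzero)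
    (h0 : p.1 ≠ 0) : Kzero ∩ squash ⁻¹' {squash p} = {p} := by
  refine Subset.antisymm (fun q ⟨_, hq⟩ => ?_) (singleton_subset_iff.mpr ⟨hp, rfl⟩)
  simp only [mem_preimage, mem_singleton_iff, squash, Prod.mk.injEq] at hq ⊢
  obtain ⟨h1, h2, h3⟩ := hq
  rw [h1] at h3
  exact Prod.ext h1 (Prod.ext h2 (mul_left_cancel₀ h0 h3))

theorem Done_eq_fiberDecomp : Done = fiberDecomp squash Kzero := by
  ext δ
  constructor
  · rintro (⟨t, ht, rfl⟩ | ⟨p, hp, hp0, rfl⟩)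
    · have hK : ((0 : ℝ), t, (0 : ℝ)) ∈ Kzero :=
        mem_Kzero.mpr ⟨⟨le_rfl, zero_le_one⟩, ht, ⟨le_rfl, zero_le_one⟩, Or.inl rfl⟩
      exact ⟨_, hK, Kzero_inter_squash_preimage_of_fst_eq_zero hK rfl⟩
    · exact ⟨p, hp, Kzero_inter_squash_preimage_of_fst_ne_zero hp hp0.ne'⟩
  · rintro ⟨p, hp, rfl⟩
    obtain ⟨h1, h2, -⟩ := mem_Kzero.mp hp
    by_cases h0 : p.1 = 0
    · exact Or.inl ⟨p.2.1, h2, Kzero_inter_squash_preimage_of_fst_eq_zero hp h0⟩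
    · exact Or.inr ⟨p, hp, h1.1.lt_of_ne' h0, Kzero_inter_squash_preimage_of_fst_ne_zero hp h0⟩

theorem isConnected_of_mem_Done {δ : Set (ℝ × ℝ × ℝ)} (hδ : δ ∈ Done) : IsConnected δ := by
  rcases hδ with ⟨t, -, rfl⟩ | ⟨p, -, -, rfl⟩
  · exact ((convex_singleton _).prod ((convex_singleton _).prod (convex_Icc _ _))).isConnected
      ⟨(0, t, 0), rfl, rfl, le_rfl, zero_le_one⟩
  · exact isConnected_singleton

theorem eq_of_mem_recipSucc_of_abs_sub_lt {x : ℝ} (hx : x ∈ recipSucc) {n : ℕ}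
    (h : |x - 1 / (n + 1)| < 1 / (n + 1) - 1 / (n + 2)) : x = 1 / (n + 1) := by
  have hn : (0 : ℝ) < 1 / (n + 2) := by positivity
  rcases hx with rfl | ⟨m, rfl⟩
  · rw [zero_sub, abs_neg, abs_of_pos (by positivity)] at h
    linarith
  rcases lt_trichotomy m n with hmn | rfl | hmn
  · have hmn' : (m : ℝ) + 1 ≤ n := by exact_mod_cast hmn
    rw [abs_lt] at h
    field_simp at h
    nlinarith
  · rfl
  · have hmn' : (n : ℝ) + 1 ≤ m := by exact_mod_cast hmn
    rw [abs_lt] at h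
    field_simp at h
    nlinarith

def Kone : Set (ℝ × ℝ × ℝ) := squash '' Kzero

theorem mem_Kone {q : ℝ × ℝ × ℝ} :
    q ∈ Kone ↔ q.1 ∈ Icc 0 1 ∧ q.2.1 ∈ Icc 0 1 ∧ 0 ≤ q.2.2 ∧
      (q.2.2 = 0 ∨ q.1 ∈ recipSucc ∧ q.2.2 ≤ q.1) := by
  constructor
  · rintro ⟨p, hp, rfl⟩
    obtain ⟨h1, h2, h3, h4⟩ := mem_Kzero.mp hp
    refine ⟨h1, h2, mul_nonneg h1.1 h3.1, h4.imp (fun h => ?_) fun h => ?_⟩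
    · simp only [squash, h, mul_zero]
    · exact ⟨h, mul_le_of_le_one_right h1.1 h3.2⟩
  · rintro ⟨h1, h2, h3, h4⟩
    by_cases h0 : q.2.2 = 0
    · refine ⟨(q.1, q.2.1, 0), mem_Kzero.mpr ⟨h1, h2, ⟨le_rfl, zero_le_one⟩, Or.inl rfl⟩, ?_⟩
      change (q.1, q.2.1, q.1 * 0) = q
      rw [mul_zero, ← h0]
    · obtain ⟨hq, hzq⟩ := h4.resolve_left h0
      have hpos : 0 < q.1 := (h3.lt_of_ne' h0).trans_le hzq
      refine ⟨(q.1, q.2.1, q.2.2 / q.1), mem_Kzero.mpr ⟨h1, h2,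
        ⟨div_nonneg h3 hpos.le, div_le_one_of_le₀ hzq hpos.le⟩, Or.inr hq⟩, ?_⟩
      simp only [squash, mul_div_cancel₀ _ hpos.ne']

theorem mem_ball_iff_abs {p q : ℝ × ℝ × ℝ} {r : ℝ} :
    p ∈ ball q r ↔ |p.1 - q.1| < r ∧ |p.2.1 - q.2.1| < r ∧ |p.2.2 - q.2.2| < r := by
  simp only [mem_ball, Prod.dist_eq, Real.dist_eq, max_lt_iff]

/-- Near the base, every point of `Kone` drops vertically to the base, which is convex. -/
theorem isPreconnected_ball_inter_Kone_of_snd_snd_eq_zero {q : ℝ × ℝ × ℝ} (hq : q ∈ Kone)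
    (hq0 : q.2.2 = 0) (ε : ℝ) : IsPreconnected (ball q ε ∩ Kone) := by
  set base : Set (ℝ × ℝ × ℝ) := Icc 0 1 ×ˢ Icc 0 1 ×ˢ {0}
  have hbase : base ⊆ Kone := fun y ⟨hy1, hy2, hy3⟩ =>
    mem_Kone.mpr ⟨hy1, hy2, (mem_singleton_iff.mp hy3).ge, Or.inl hy3⟩
  have hbase_conv : Convex ℝ (ball q ε ∩ base) :=
    (convex_ball q ε).inter ((convex_Icc _ _).prod ((convex_Icc _ _).prod (convex_singleton _)))
  have hqbase : q ∈ base := ⟨(mem_Kone.mp hq).1, (mem_Kone.mp hq).2.1, hq0⟩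
  refine isPreconnected_of_forall q fun y ⟨hyq, hy⟩ => ?_
  obtain ⟨hy1, hy2, hy3, hy4⟩ := mem_Kone.mp hy
  set column : Set (ℝ × ℝ × ℝ) := {y.1} ×ˢ {y.2.1} ×ˢ Icc 0 y.2.2
  have hcolumn : column ⊆ Kone := by
    rintro z ⟨hz1, hz2, hz3⟩
    rw [mem_singleton_iff] at hz1 hz2
    refine mem_Kone.mpr ⟨hz1 ▸ hy1, hz2 ▸ hy2, hz3.1, ?_⟩
    rcases hy4 with hy0 | ⟨hy, hyy⟩
    · exact Or.inl (le_antisymm (hy0 ▸ hz3.2) hz3.1)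
    · by_cases hz0 : z.2.2 = 0
      · exact Or.inl hz0
      · exact Or.inr ⟨hz1 ▸ hy, hz1 ▸ hz3.2.trans hyy⟩
  have hcolumn_conv : Convex ℝ (ball q ε ∩ column) :=
    (convex_ball q ε).inter ((convex_singleton _).prod ((convex_singleton _).prod (convex_Icc _ _)))
  have hfoot : (y.1, y.2.1, (0 : ℝ)) ∈ ball q ε := by
    obtain ⟨h1, h2, h3⟩ := mem_ball_iff_abs.mp hyq
    exact mem_ball_iff_abs.mpr ⟨h1, h2, by simpa [hq0] using (abs_nonneg _).trans_lt h3⟩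
  refine ⟨ball q ε ∩ base ∪ ball q ε ∩ column,
    union_subset (inter_subset_inter_right _ hbase) (inter_subset_inter_right _ hcolumn),
    Or.inl ⟨mem_ball_self ((abs_nonneg _).trans_lt (mem_ball_iff_abs.mp hyq).1), hqbase⟩,
    Or.inr ⟨hyq, rfl, rfl, hy3, le_rfl⟩, ?_⟩
  exact IsPreconnected.union _ ⟨hfoot, hy1, hy2, rfl⟩ ⟨hfoot, rfl, rfl, le_rfl, hy3⟩
    hbase_conv.isPreconnected hcolumn_conv.isPreconnected

/-- Above the base, a small ball sees only the square through `q`, since the first coordinates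
`1 / (n + 1)` are isolated. -/
theorem exists_isPreconnected_ball_inter_Kone_of_snd_snd_pos {q : ℝ × ℝ × ℝ} (hq : q ∈ Kone)
    (hq0 : 0 < q.2.2) {ε : ℝ} (hε : 0 < ε) :
    ∃ r ∈ Ioc 0 ε, IsPreconnected (ball q r ∩ Kone) := by
  obtain ⟨hq1, -, -, hq4⟩ := mem_Kone.mp hq
  obtain ⟨hqS, hzq⟩ := hq4.resolve_left hq0.ne'
  obtain ⟨n, hn⟩ := hqS.resolve_left (hq0.trans_le hzq).ne'
  have hgap : (0 : ℝ) < 1 / (n + 1) - 1 / (n + 2) := by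
    rw [sub_pos]
    gcongr
    linarith
  set r := min ε (min q.2.2 (1 / (n + 1) - 1 / (n + 2)))
  have hr : 0 < r := lt_min hε (lt_min hq0 hgap)
  have hrz : r ≤ q.2.2 := (min_le_right _ _).trans (min_le_left _ _)
  have hrgap : r ≤ 1 / (n + 1) - 1 / (n + 2) := (min_le_right _ _).trans (min_le_right _ _)
  refine ⟨r, ⟨hr, min_le_left _ _⟩, ?_⟩
  suffices h : ball q r ∩ Kone = ball q r ∩ ({q.1} ×ˢ Icc 0 1 ×ˢ Icc 0 q.1) by
    rw [h]
    exact ((convex_ball q r).inter ((convex_singleton _).prod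
      ((convex_Icc _ _).prod (convex_Icc _ _)))).isPreconnected
  refine Subset.antisymm (fun y ⟨hyq, hy⟩ => ⟨hyq, ?_⟩) (fun y ⟨hyq, hy1, hy2, hy3⟩ => ⟨hyq, ?_⟩)
  · obtain ⟨h1, -, h3⟩ := mem_ball_iff_abs.mp hyq
    obtain ⟨-, hy2, hy3, hy4⟩ := mem_Kone.mp hy
    have hy0 : 0 < y.2.2 := by linarith [(abs_lt.mp h3).1]
    obtain ⟨hyS, hzy⟩ := hy4.resolve_left hy0.ne'
    have hy1 : y.1 = q.1 := by
      rw [hn] at h1 ⊢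
      exact eq_of_mem_recipSucc_of_abs_sub_lt hyS (h1.trans_le hrgap)
    exact ⟨hy1, hy2, hy3, hy1 ▸ hzy⟩
  · rw [mem_singleton_iff] at hy1
    refine mem_Kone.mpr ⟨hy1 ▸ hq1, hy2, hy3.1, Or.inr ⟨hy1 ▸ hqS, hy1 ▸ hy3.2⟩⟩

theorem locallyConnectedSpace_of_isPreconnected_ball_inter {X : Type*} [PseudoMetricSpace X]
    {S : Set X} (h : ∀ x ∈ S, ∀ ε > 0, ∃ r ∈ Ioc 0 ε, IsPreconnected (ball x r ∩ S)) :
    LocallyConnectedSpace S := by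
  rw [locallyConnectedSpace_iff_connected_subsets]
  intro x U hU
  obtain ⟨ε, hε, hεU⟩ := Metric.mem_nhds_iff.mp hU
  obtain ⟨r, ⟨hr, hrε⟩, hrS⟩ := h x x.2 ε hε
  refine ⟨ball x r, ball_mem_nhds x hr, ?_, (ball_subset_ball hrε).trans hεU⟩
  rwa [← IsInducing.subtypeVal.isPreconnected_image, ← Subtype.preimage_ball,
    Subtype.image_preimage_coe, inter_comm]

theorem locallyConnectedSpace_Kone : LocallyConnectedSpace Kone := by
  refine locallyConnectedSpace_of_isPreconnected_ball_inter fun q hq ε hε => ?_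
  rcases (mem_Kone.mp hq).2.2.1.eq_or_lt with hq0 | hq0
  · exact ⟨ε, ⟨hε, le_rfl⟩, isPreconnected_ball_inter_Kone_of_snd_snd_eq_zero hq hq0.symm ε⟩
  · exact exists_isPreconnected_ball_inter_Kone_of_snd_snd_pos hq hq0 hε

theorem isPeanoDecomp_Done : IsPeanoDecomp Kzero Done := by
  refine ⟨⟨Done_eq_fiberDecomp ▸ isUSCDecomp_fiberDecomp continuous_squash isCompact_Kzero,
    fun δ hδ => isConnected_of_mem_Done hδ⟩, ?_⟩
  rw [Done_eq_fiberDecomp]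
  obtain ⟨e⟩ := nonempty_homeomorph_decompQuot_fiberDecomp continuous_squash isCompact_Kzero
  have := isCompact_iff_compactSpace.mp isCompact_Kzero
  have : LocallyConnectedSpace (squash '' Kzero) := locallyConnectedSpace_Kone
  have : ConnectedSpace (squash '' Kzero) := isConnected_iff_connectedSpace.mp
    (isConnected_Kzero.image _ continuous_squash.continuousOn)
  have := e.isOpenEmbedding.locallyConnectedSpace
  have := e.isEmbedding.metrizableSpace
  have := e.symm.surjective.connectedSpace e.symm.continuous
  exact IsPeanoCompactumSp.of_locallyConnectedSpace

theorem IsPeanoDecomp.exists_isOpen_isConnected_subset {X : Type*} [MetricSpace X] {K : Set X}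
    {D : Set (Set X)} (hD : IsPeanoDecomp K D) (hK : IsCompact K) (hKc : IsConnected K)
    {δ : Set X} (hδ : δ ∈ D) {x : K} (hx : x.1 ∈ δ) {U : Set K} (hU : IsOpen U)
    (hδU : Subtype.val ⁻¹' δ ⊆ U) : ∃ V : Set K, IsOpen V ∧ IsConnected V ∧ x ∈ V ∧ V ⊆ U := by
  have := isCompact_iff_compactSpace.mp hK
  have := isConnected_iff_connectedSpace.mp hKc
  have : ConnectedSpace (DecompQuot K D) := Quot.mk_surjective.connectedSpace continuous_quot_mk
  have := hD.2.locallyConnectedSpace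
  have := hD.2.metrizableSpace
  obtain ⟨N, hN, hNc, hxN, hNU⟩ := exists_isOpen_isConnected_preimage_subset continuous_quot_mk
    hU ((hD.1.1.preimage_mk_eq hδ hx).trans_subset hδU)
  exact ⟨_, hN.preimage continuous_quot_mk,
    isQuotientMap_quot_mk.isConnected_preimage_of_isOpen hD.1.isConnected_preimage_mk hN hNc,
    hxN, hNU⟩

section Refinement

variable {D : Set (Set (ℝ × ℝ × ℝ))} {δ : Set (ℝ × ℝ × ℝ)}

theorem foot_mem_of_subset_vertSeg (hD : IsPeanoDecomp Kzero D) (hδ : δ ∈ D) {t : ℝ}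
    (hδt : δ ⊆ vertSeg t) : ((0 : ℝ), t, (0 : ℝ)) ∈ δ := by
  by_contra h0
  obtain ⟨p, hp⟩ := (hD.1.1.1 δ hδ).1
  have hpK : p ∈ Kzero := (hD.1.1.1 δ hδ).2.2 hp
  have hpos : ∀ q ∈ δ, 0 < q.2.2 := fun q hq => by
    obtain ⟨h1, h2, h3⟩ := mem_vertSeg.mp (hδt hq)
    refine h3.1.lt_of_ne fun h => h0 ?_
    rwa [show ((0 : ℝ), t, (0 : ℝ)) = q from Prod.ext h1.symm (Prod.ext h2.symm h)]
  obtain ⟨V, hV, hVc, hpV, hVpos⟩ := hD.exists_isOpen_isConnected_subset isCompact_Kzero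
    isConnected_Kzero hδ (x := ⟨p, hpK⟩) hp (U := {q | 0 < q.1.2.2})
    (isOpen_lt continuous_const (by fun_prop)) fun q hq => hpos _ hq
  obtain ⟨hp1, -, hp3⟩ := mem_vertSeg.mp (hδt hp)
  have hsq : ∀ n : ℕ, (1 / ((n : ℝ) + 1), p.2.1, p.2.2) ∈ Kzero := fun n =>
    mem_Kzero.mpr ⟨recipSucc_subset_Icc (Or.inr ⟨n, rfl⟩), (mem_Kzero.mp hpK).2.1, hp3,
      Or.inr (Or.inr ⟨n, rfl⟩)⟩
  have htend : Tendsto (fun n : ℕ => (⟨_, hsq n⟩ : Kzero)) atTop (𝓝 ⟨p, hpK⟩) := by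
    have h := (tendsto_one_div_add_atTop_nhds_zero_nat (𝕜 := ℝ)).prodMk_nhds
      (tendsto_const_nhds (x := p.2))
    rw [← hp1] at h
    exact tendsto_subtype_rng.mpr h
  obtain ⟨n, hn⟩ := (htend.eventually (hV.mem_nhds hpV)).exists
  have hP : IsPreconnected ((fun q : Kzero => q.1.1) '' V) :=
    hVc.isPreconnected.image _ (by fun_prop)
  have hPS : (fun q : Kzero => q.1.1) '' V ⊆ recipSucc := by
    rintro _ ⟨q, hq, rfl⟩
    exact (mem_Kzero.mp q.2).2.2.2.resolve_left (hVpos hq).ne'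
  have hIcc := hP.Icc_subset ⟨⟨p, hpK⟩, hpV, hp1⟩ ⟨_, hn, rfl⟩
  exact (Cardinal.Real.Icc_countable_iff.mp (countable_recipSucc.mono (hIcc.trans hPS))).not_gt
    (by positivity)

theorem subset_vertSeg_of_refines (hre : Refines D Done) (hδ : δ ∈ D) {p : ℝ × ℝ × ℝ}
    (hp : p ∈ δ) (hp0 : p.1 = 0) : δ ⊆ vertSeg p.2.1 := by
  obtain ⟨δ', hδ', hsub⟩ := hre δ hδ
  rcases hδ' with ⟨t, -, rfl⟩ | ⟨q, -, hq, rfl⟩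
  · obtain ⟨-, rfl, -⟩ := mem_vertSeg.mp (hsub hp)
    exact hsub
  · rw [← mem_singleton_iff.mp (hsub hp), hp0] at hq
    exact absurd hq (lt_irrefl 0)

theorem eq_vertSeg_of_subset (hD : IsPeanoDecomp Kzero D) (hre : Refines D Done) (hδ : δ ∈ D)
    {t : ℝ} (ht : t ∈ Icc 0 1) (hδt : δ ⊆ vertSeg t) : δ = vertSeg t := by
  refine hδt.antisymm fun p hp => ?_
  obtain ⟨hp1, hp2, hp3⟩ := mem_vertSeg.mp hp
  obtain ⟨δ', hδ', hpδ'⟩ := hD.1.1.exists_mem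
    (mem_Kzero.mpr ⟨by simp [hp1], hp2 ▸ ht, hp3, Or.inr (by rw [hp1]; exact mem_insert 0 _)⟩)
  have hδ't : δ' ⊆ vertSeg t := hp2 ▸ subset_vertSeg_of_refines hre hδ' hpδ' hp1
  rwa [hD.1.1.eq_of_mem hδ hδ' (foot_mem_of_subset_vertSeg hD hδ hδt)
    (foot_mem_of_subset_vertSeg hD hδ' hδ't)]

theorem subset_Done_of_refines (hD : IsPeanoDecomp Kzero D) (hre : Refines D Done) :
    D ⊆ Done := by
  intro δ hδ
  obtain ⟨δ', hδ', hsub⟩ := hre δ hδ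
  rcases hδ' with ⟨t, ht, rfl⟩ | ⟨p, hp, hp0, rfl⟩
  · exact Or.inl ⟨t, ht, eq_vertSeg_of_subset hD hre hδ ht hsub⟩
  · exact Or.inr ⟨p, hp, hp0, (hD.1.1.1 δ hδ).1.subset_singleton_iff.mp hsub⟩

end Refinement

/-- `D₁` is an atomic decomposition of `K₀` with Peano quotient: it is a
Peano decomposition of `K₀`, and no Peano decomposition of `K₀` other than `D₁` itself
refines `D₁`. -/
theorem Done_isAtomicDecomposition :
    IsPeanoDecomp Kzero Done ∧
      ∀ D : Set (Set (ℝ × ℝ × ℝ)), IsPeanoDecomp Kzero D → Refines D Done → D = Done :=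
  ⟨isPeanoDecomp_Done, fun _ hD hre =>
    isPeanoDecomp_Done.1.1.eq_of_subset hD.1.1.2.2.1 (subset_Done_of_refines hD hre)⟩
end
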